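/- arXiv:1909.06958 — 6 statements merged into one kernel-verified Lean document; each statement's English description precedes it below -/
import Mathlib

section
/- Let I₁ ⊆ S₁ = K[x₁,…,x_p] and I₂ ⊆ S₂ = K[y₁,…,y_q] be monomial ideals and let I = I₁S + I₂S ⊆ S = K[x₁,…,x_p,y₁,…,y_q] be the ideal they generate in the combined polynomial ring. Assume that I₁, I₂ and I all satisfy the Ratliff condition. Then for every integer m ≥ 1 and every monomial u ∈ S, one has u ∈ (Iᵐ : 𝔪) \ Iᵐ if and only if u = u₁·u₂ where u₁ is a monomial in the x-variables, u₂ is a monomial in the y-variables, and there exist integers r, s ≥ 1 with r + s = m + 1 such that u₁ ∈ (I₁ʳ : 𝔪₁) \ I₁ʳ and u₂ ∈ (I₂ˢ : 𝔪₂) \ I₂ˢ. (This is the statement Soc(I) = Soc(I₁)·Soc(I₂) expressed on monomials.) -/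
open MvPolynomial

open Pointwise

section SocAux

variable {K : Type*} [Field K]

private lemma mem_mId {σ : Type*} {A : Set (σ →₀ ℕ)} {d : σ →₀ ℕ} :
    monomial d (1:K) ∈ Ideal.span ((fun a => monomial a (1 : K)) '' A) ↔ ∃ a ∈ A, a ≤ d := by
  classical
  have hs : (monomial d (1:K)).support = {d} := by
    rw [support_monomial, if_neg one_ne_zero]
  rw [mem_ideal_span_monomial_image, hs]
  simp only [Finset.mem_singleton]
  constructor
  · intro h
    exact h d rfl
  · rintro ⟨a, ha, hle⟩ xi rfl
    exact ⟨a, ha, hle⟩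

private lemma monImage_mul {σ : Type*} (A B : Set (σ →₀ ℕ)) :
    ((fun a => monomial a (1 : K)) '' A) * ((fun a => monomial a (1 : K)) '' B)
      = (fun a => monomial a (1 : K)) '' (A + B) := by
  ext f
  simp only [Set.mem_mul, Set.mem_add, Set.mem_image]
  constructor
  · rintro ⟨x, ⟨a, ha, rfl⟩, y, ⟨b, hb, rfl⟩, rfl⟩
    exact ⟨a + b, ⟨a, ha, b, hb, rfl⟩, by rw [monomial_mul, one_mul]⟩
  · rintro ⟨c, ⟨a, ha, b, hb, rfl⟩, rfl⟩
    exact ⟨monomial a 1, ⟨a, ha, rfl⟩, monomial b 1, ⟨b, hb, rfl⟩,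
      by rw [monomial_mul, one_mul]⟩

private lemma monImage_pow {σ : Type*} (A : Set (σ →₀ ℕ)) (n : ℕ) :
    ((fun a => monomial a (1 : K)) '' A) ^ n = (fun a => monomial a (1 : K)) '' (n • A) := by
  induction n with
  | zero =>
      rw [pow_zero, zero_nsmul]
      have h0 : (0 : Set (σ →₀ ℕ)) = {0} := rfl
      rw [h0, Set.image_singleton, monomial_zero', map_one]
      rfl
  | succ n ih =>
      rw [pow_succ, ih, succ_nsmul, monImage_mul]

private lemma mem_mId_pow {σ : Type*} {A : Set (σ →₀ ℕ)} {d : σ →₀ ℕ} {n : ℕ} :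
    monomial d (1:K) ∈ (Ideal.span ((fun a => monomial a (1 : K)) '' A)) ^ n
      ↔ ∃ a ∈ n • A, a ≤ d := by
  have h : (Ideal.span ((fun a => monomial a (1 : K)) '' A)) ^ n
      = Ideal.span ((fun a => monomial a (1 : K)) '' (n • A)) := by
    rw [Ideal.span, Submodule.span_pow, monImage_pow]
  rw [h, mem_mId]

private lemma mem_nsmul_union {M : Type*} [AddCommMonoid M] {A B : Set M} {n : ℕ} {e : M} :
    e ∈ n • (A ∪ B) ↔ ∃ i j, i + j = n ∧ ∃ α ∈ i • A, ∃ β ∈ j • B, α + β = e := by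
  induction n generalizing e with
  | zero =>
      rw [zero_nsmul]
      constructor
      · intro h
        have he : e = 0 := h
        exact ⟨0, 0, rfl, 0, rfl, 0, rfl, by simp [he]⟩
      · rintro ⟨i, j, hij, α, hα, β, hβ, rfl⟩
        obtain ⟨hi, hj⟩ : i = 0 ∧ j = 0 := by omega
        subst hi; subst hj
        rw [zero_nsmul] at hα hβ
        have hα0 : α = 0 := hα
        have hβ0 : β = 0 := hβ
        simp [hα0, hβ0]
  | succ n ih =>
      rw [succ_nsmul]
      constructor
      · intro h
        obtain ⟨x, hx, y, hy, rfl⟩ := Set.mem_add.1 h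
        obtain ⟨i, j, hij, α, hα, β, hβ, rfl⟩ := ih.1 hx
        rcases hy with hy | hy
        · refine ⟨i + 1, j, by omega, α + y, ?_, β, hβ, by rw [add_right_comm]⟩
          rw [succ_nsmul]
          exact Set.add_mem_add hα hy
        · refine ⟨i, j + 1, by omega, α, hα, β + y, ?_, by rw [add_assoc]⟩
          rw [succ_nsmul]
          exact Set.add_mem_add hβ hy
      · rintro ⟨i, j, hij, α, hα, β, hβ, rfl⟩
        have h1 : α + β ∈ i • (A ∪ B) + j • (A ∪ B) := by
          refine Set.add_mem_add ?_ ?_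
          · exact Set.nsmul_subset_nsmul_left Set.subset_union_left hα
          · exact Set.nsmul_subset_nsmul_left Set.subset_union_right hβ
        rw [← add_nsmul, hij, succ_nsmul] at h1
        exact h1

private lemma mem_colon_span_iff {R : Type*} [CommRing R] (J : Ideal R) (s : Set R) (f : R) :
    f ∈ J.colon (Ideal.span s) ↔ ∀ x ∈ s, x * f ∈ J := by
  rw [Submodule.mem_colon', SetLike.coe_subset_coe, Ideal.span_le]
  constructor
  · intro h x hx
    have := h hx
    simpa [smul_eq_mul, mul_comm] using this
  · intro h x hx
    have := h x hx
    simpa [smul_eq_mul, mul_comm] using this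

private lemma mId_le_maximal {σ : Type*} {A : Set (σ →₀ ℕ)} (h0 : (0 : σ →₀ ℕ) ∉ A) :
    Ideal.span ((fun a => monomial a (1 : K)) '' A)
      ≤ Ideal.span (Set.range (X : σ → MvPolynomial σ K)) := by
  rw [Ideal.span_le]
  rintro _ ⟨a, ha, rfl⟩
  refine SetLike.mem_coe.2 ?_
  show monomial a (1 : K) ∈ Ideal.span (Set.range (X : σ → MvPolynomial σ K))
  have hane : a ≠ 0 := fun h => h0 (h ▸ ha)
  obtain ⟨i, hi⟩ := Finsupp.ne_iff.1 hane
  simp only [Finsupp.coe_zero, Pi.zero_apply] at hi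
  have hle : Finsupp.single i 1 ≤ a := Finsupp.single_le_iff.2 (by omega)
  have key : monomial a (1 : K) = X i * monomial (a - Finsupp.single i 1) 1 := by
    rw [X, monomial_mul, one_mul]
    congr 1
    rw [add_tsub_cancel_of_le hle]
  rw [key]
  exact Ideal.mul_mem_right _ _ (Ideal.subset_span (Set.mem_range_self i))

private lemma image_mapDomain_nsmul {α β : Type*} (f : α → β) (A : Set (α →₀ ℕ)) (n : ℕ) :
    Finsupp.mapDomain (M := ℕ) f '' (n • A) = n • (Finsupp.mapDomain (M := ℕ) f '' A) := by
  have hfun : ⇑(Finsupp.mapDomain.addMonoidHom (M := ℕ) f) = Finsupp.mapDomain f := rfl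
  rw [← hfun, Set.image_nsmul]

end SocAux

/-- Socle of a sum of monomial ideals in disjoint sets of variables,
expressed on monomials: `Soc(I) = Soc(I₁)·Soc(I₂)`. -/
theorem socle_of_sum_of_monomial_ideals
    {K : Type*} [Field K] (p q : ℕ)
    (I₁ : Ideal (MvPolynomial (Fin p) K)) (I₂ : Ideal (MvPolynomial (Fin q) K))
    -- I₁ and I₂ are monomial ideals
    (hI₁mon : ∃ A : Set (Fin p →₀ ℕ), I₁ = Ideal.span ((fun a => monomial a (1 : K)) '' A))
    (hI₂mon : ∃ A : Set (Fin q →₀ ℕ), I₂ = Ideal.span ((fun a => monomial a (1 : K)) '' A))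
    -- I is the ideal generated by I₁ and I₂ in the combined polynomial ring
    (I : Ideal (MvPolynomial (Fin p ⊕ Fin q) K))
    (hI : I = I₁.map (rename (Sum.inl : Fin p → Fin p ⊕ Fin q))
            ⊔ I₂.map (rename (Sum.inr : Fin q → Fin p ⊕ Fin q)))
    -- the graded maximal ideals
    (m₁ : Ideal (MvPolynomial (Fin p) K)) (hm₁ : m₁ = Ideal.span (Set.range X))
    (m₂ : Ideal (MvPolynomial (Fin q) K)) (hm₂ : m₂ = Ideal.span (Set.range X))
    (mS : Ideal (MvPolynomial (Fin p ⊕ Fin q) K)) (hmS : mS = Ideal.span (Set.range X))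
    -- the Ratliff condition for I₁, I₂ and I
    (hR₁ : ∀ m : ℕ, (I₁ ^ (m + 1)).colon I₁ = I₁ ^ m)
    (hR₂ : ∀ m : ℕ, (I₂ ^ (m + 1)).colon I₂ = I₂ ^ m)
    (hR : ∀ m : ℕ, (I ^ (m + 1)).colon I = I ^ m)
    (m : ℕ) (hm : 1 ≤ m) (d : (Fin p ⊕ Fin q) →₀ ℕ) :
    (monomial d (1 : K) ∈ (I ^ m).colon mS ∧ monomial d (1 : K) ∉ I ^ m) ↔
      ∃ (d₁ : Fin p →₀ ℕ) (d₂ : Fin q →₀ ℕ) (r s : ℕ), 1 ≤ r ∧ 1 ≤ s ∧ r + s = m + 1 ∧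
        monomial d (1 : K) =
          rename Sum.inl (monomial d₁ (1 : K)) * rename Sum.inr (monomial d₂ (1 : K)) ∧
        monomial d₁ (1 : K) ∈ (I₁ ^ r).colon m₁ ∧ monomial d₁ (1 : K) ∉ I₁ ^ r ∧
        monomial d₂ (1 : K) ∈ (I₂ ^ s).colon m₂ ∧ monomial d₂ (1 : K) ∉ I₂ ^ s := by
  classical
  obtain ⟨A, hA⟩ := hI₁mon
  obtain ⟨B, hB⟩ := hI₂mon
  obtain ⟨m', rfl⟩ : ∃ m', m = m' + 1 := ⟨m - 1, by omega⟩
  -- left and right parts of an exponent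
  set dL : ((Fin p ⊕ Fin q) →₀ ℕ) → (Fin p →₀ ℕ) :=
    fun e => Finsupp.comapDomain Sum.inl e Sum.inl_injective.injOn with hdLdef
  set dR : ((Fin p ⊕ Fin q) →₀ ℕ) → (Fin q →₀ ℕ) :=
    fun e => Finsupp.comapDomain Sum.inr e Sum.inr_injective.injOn with hdRdef
  have hdLapp : ∀ e x, dL e x = e (Sum.inl x) := fun e x => rfl
  have hdRapp : ∀ e y, dR e y = e (Sum.inr y) := fun e y => rfl
  -- decomposition of an exponent
  have hdecomp : ∀ e : (Fin p ⊕ Fin q) →₀ ℕ,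
      e = Finsupp.mapDomain Sum.inl (dL e) + Finsupp.mapDomain Sum.inr (dR e) := by
    intro e
    ext s
    rcases s with x | y
    · rw [Finsupp.add_apply, Finsupp.mapDomain_apply Sum.inl_injective,
        Finsupp.mapDomain_notin_range _ _ (by simp), hdLapp, add_zero]
    · rw [Finsupp.add_apply, Finsupp.mapDomain_apply Sum.inr_injective,
        Finsupp.mapDomain_notin_range _ _ (by simp), hdRapp, zero_add]
  -- comparison of exponents via parts
  have hle_iff : ∀ (α₀ : Fin p →₀ ℕ) (β₀ : Fin q →₀ ℕ) (e : (Fin p ⊕ Fin q) →₀ ℕ),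
      Finsupp.mapDomain Sum.inl α₀ + Finsupp.mapDomain Sum.inr β₀ ≤ e
        ↔ α₀ ≤ dL e ∧ β₀ ≤ dR e := by
    intro α₀ β₀ e
    rw [Finsupp.le_def]
    constructor
    · intro h
      constructor
      · rw [Finsupp.le_def]
        intro x
        have hx := h (Sum.inl x)
        rw [Finsupp.add_apply, Finsupp.mapDomain_apply Sum.inl_injective,
          Finsupp.mapDomain_notin_range _ _ (by simp), add_zero] at hx
        rw [hdLapp]
        exact hx
      · rw [Finsupp.le_def]
        intro y
        have hy := h (Sum.inr y)
        rw [Finsupp.add_apply, Finsupp.mapDomain_apply Sum.inr_injective,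
          Finsupp.mapDomain_notin_range _ _ (by simp), zero_add] at hy
        rw [hdRapp]
        exact hy
    · rintro ⟨h1, h2⟩ s
      rcases s with x | y
      · rw [Finsupp.add_apply, Finsupp.mapDomain_apply Sum.inl_injective,
          Finsupp.mapDomain_notin_range _ _ (by simp), add_zero]
        exact Finsupp.le_def.1 h1 x
      · rw [Finsupp.add_apply, Finsupp.mapDomain_apply Sum.inr_injective,
          Finsupp.mapDomain_notin_range _ _ (by simp), zero_add]
        exact Finsupp.le_def.1 h2 y
  -- parts of shifted exponents
  have hsingle_inl : ∀ (k : Fin p) (x : Fin p),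
      (Finsupp.single (Sum.inl k : Fin p ⊕ Fin q) (1:ℕ)) (Sum.inl x) = Finsupp.single k 1 x := by
    intro k x
    simp [Finsupp.single_apply]
  have hsingle_inr : ∀ (k : Fin q) (y : Fin q),
      (Finsupp.single (Sum.inr k : Fin p ⊕ Fin q) (1:ℕ)) (Sum.inr y) = Finsupp.single k 1 y := by
    intro k y
    simp [Finsupp.single_apply]
  have hdLshift_inl : ∀ (k : Fin p) (e : (Fin p ⊕ Fin q) →₀ ℕ),
      dL (Finsupp.single (Sum.inl k) 1 + e) = Finsupp.single k 1 + dL e := by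
    intro k e
    ext x
    rw [hdLapp, Finsupp.add_apply, Finsupp.add_apply, hdLapp, hsingle_inl]
  have hdRshift_inl : ∀ (k : Fin p) (e : (Fin p ⊕ Fin q) →₀ ℕ),
      dR (Finsupp.single (Sum.inl k) 1 + e) = dR e := by
    intro k e
    ext y
    rw [hdRapp, Finsupp.add_apply, hdRapp]
    simp [Finsupp.single_apply]
  have hdLshift_inr : ∀ (k : Fin q) (e : (Fin p ⊕ Fin q) →₀ ℕ),
      dL (Finsupp.single (Sum.inr k) 1 + e) = dL e := by
    intro k e
    ext x
    rw [hdLapp, Finsupp.add_apply, hdLapp]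
    simp [Finsupp.single_apply]
  have hdRshift_inr : ∀ (k : Fin q) (e : (Fin p ⊕ Fin q) →₀ ℕ),
      dR (Finsupp.single (Sum.inr k) 1 + e) = Finsupp.single k 1 + dR e := by
    intro k e
    ext y
    rw [hdRapp, Finsupp.add_apply, Finsupp.add_apply, hdRapp, hsingle_inr]
  -- parts of a sum of mapped exponents
  have hdLsum : ∀ (d₁ : Fin p →₀ ℕ) (d₂ : Fin q →₀ ℕ),
      dL (Finsupp.mapDomain Sum.inl d₁ + Finsupp.mapDomain Sum.inr d₂) = d₁ := by
    intro d₁ d₂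
    ext x
    rw [hdLapp, Finsupp.add_apply, Finsupp.mapDomain_apply Sum.inl_injective,
      Finsupp.mapDomain_notin_range _ _ (by simp), add_zero]
  have hdRsum : ∀ (d₁ : Fin p →₀ ℕ) (d₂ : Fin q →₀ ℕ),
      dR (Finsupp.mapDomain Sum.inl d₁ + Finsupp.mapDomain Sum.inr d₂) = d₂ := by
    intro d₁ d₂
    ext y
    rw [hdRapp, Finsupp.add_apply, Finsupp.mapDomain_apply Sum.inr_injective,
      Finsupp.mapDomain_notin_range _ _ (by simp), zero_add]
  -- the generating set of I
  set AB : Set ((Fin p ⊕ Fin q) →₀ ℕ) :=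
    (Finsupp.mapDomain (Sum.inl : Fin p → Fin p ⊕ Fin q) '' A)
      ∪ (Finsupp.mapDomain (Sum.inr : Fin q → Fin p ⊕ Fin q) '' B) with hABdef
  have hIAB : I = Ideal.span ((fun a => monomial a (1 : K)) '' AB) := by
    rw [hI, hA, hB, Ideal.map_span, Ideal.map_span, hABdef, Set.image_union, ← Ideal.span_union]
    congr 2
    · rw [Set.image_image, Set.image_image]
      apply Set.image_congr'
      intro a
      exact rename_monomial _ _ _
    · rw [Set.image_image, Set.image_image]
      apply Set.image_congr'
      intro a
      exact rename_monomial _ _ _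
  -- the key membership criterion for powers of I
  have hkey : ∀ (e : (Fin p ⊕ Fin q) →₀ ℕ) (n : ℕ),
      monomial e (1 : K) ∈ I ^ n ↔
        ∃ i j, i + j = n ∧ monomial (dL e) (1 : K) ∈ I₁ ^ i
          ∧ monomial (dR e) (1 : K) ∈ I₂ ^ j := by
    intro e n
    rw [hIAB, mem_mId_pow, hA, hB]
    constructor
    · rintro ⟨a, ha, hale⟩
      obtain ⟨i, j, hij, α, hα, β, hβ, rfl⟩ := mem_nsmul_union.1 ha
      rw [← image_mapDomain_nsmul] at hα hβ
      obtain ⟨α₀, hα₀, rfl⟩ := hα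
      obtain ⟨β₀, hβ₀, rfl⟩ := hβ
      obtain ⟨h1, h2⟩ := (hle_iff α₀ β₀ e).1 hale
      exact ⟨i, j, hij, mem_mId_pow.2 ⟨α₀, hα₀, h1⟩, mem_mId_pow.2 ⟨β₀, hβ₀, h2⟩⟩
    · rintro ⟨i, j, hij, h1, h2⟩
      obtain ⟨α₀, hα₀, h1'⟩ := mem_mId_pow.1 h1
      obtain ⟨β₀, hβ₀, h2'⟩ := mem_mId_pow.1 h2
      refine ⟨Finsupp.mapDomain Sum.inl α₀ + Finsupp.mapDomain Sum.inr β₀, ?_, ?_⟩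
      · apply mem_nsmul_union.2
        refine ⟨i, j, hij, Finsupp.mapDomain Sum.inl α₀, ?_,
          Finsupp.mapDomain Sum.inr β₀, ?_, rfl⟩
        · rw [← image_mapDomain_nsmul]
          exact ⟨α₀, hα₀, rfl⟩
        · rw [← image_mapDomain_nsmul]
          exact ⟨β₀, hβ₀, rfl⟩
      · exact (hle_iff α₀ β₀ e).2 ⟨h1', h2'⟩
  -- colon with graded maximal ideals
  have hcolon₁ : ∀ (J : Ideal (MvPolynomial (Fin p) K)) (f : MvPolynomial (Fin p) K),
      f ∈ J.colon m₁ ↔ ∀ k, X k * f ∈ J := by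
    intro J f
    rw [hm₁, mem_colon_span_iff]
    exact ⟨fun h k => h _ ⟨k, rfl⟩, by rintro h _ ⟨k, rfl⟩; exact h k⟩
  have hcolon₂ : ∀ (J : Ideal (MvPolynomial (Fin q) K)) (f : MvPolynomial (Fin q) K),
      f ∈ J.colon m₂ ↔ ∀ k, X k * f ∈ J := by
    intro J f
    rw [hm₂, mem_colon_span_iff]
    exact ⟨fun h k => h _ ⟨k, rfl⟩, by rintro h _ ⟨k, rfl⟩; exact h k⟩
  have hcolonS : ∀ (J : Ideal (MvPolynomial (Fin p ⊕ Fin q) K))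
      (f : MvPolynomial (Fin p ⊕ Fin q) K),
      f ∈ J.colon mS ↔ ∀ k, X k * f ∈ J := by
    intro J f
    rw [hmS, mem_colon_span_iff]
    exact ⟨fun h k => h _ ⟨k, rfl⟩, by rintro h _ ⟨k, rfl⟩; exact h k⟩
  -- X k * monomial e 1 = monomial (single k 1 + e) 1
  have hXmul : ∀ {σ : Type} (k : σ) (e : σ →₀ ℕ),
      (X k : MvPolynomial σ K) * monomial e 1 = monomial (Finsupp.single k 1 + e) 1 := by
    intro σ k e
    rw [X, monomial_mul, one_mul]
  constructor
  · rintro ⟨hsoc, hnot⟩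
    have h0AB : (0 : (Fin p ⊕ Fin q) →₀ ℕ) ∉ AB := by
      intro h0
      apply hnot
      rw [hIAB]
      exact mem_mId_pow.2 ⟨0, Set.zero_mem_nsmul h0, zero_le⟩
    have hIle : I ≤ mS := by
      rw [hIAB, hmS]
      exact mId_le_maximal h0AB
    have humem : monomial d (1 : K) ∈ I ^ m' := by
      have h1 : monomial d (1 : K) ∈ (I ^ (m' + 1)).colon I :=
        Submodule.colon_mono le_rfl hIle hsoc
      rwa [hR m'] at h1
    obtain ⟨i, j, hij, h1, h2⟩ := (hkey d m').1 humem
    have hn1 : monomial (dL d) (1 : K) ∉ I₁ ^ (i + 1) := fun hmem =>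
      hnot ((hkey d (m' + 1)).2 ⟨i + 1, j, by omega, hmem, h2⟩)
    have hn2 : monomial (dR d) (1 : K) ∉ I₂ ^ (j + 1) := fun hmem =>
      hnot ((hkey d (m' + 1)).2 ⟨i, j + 1, by omega, h1, hmem⟩)
    refine ⟨dL d, dR d, i + 1, j + 1, by omega, by omega, by omega, ?_, ?_, hn1, ?_, hn2⟩
    · rw [rename_monomial, rename_monomial, monomial_mul, one_mul, ← hdecomp d]
    · rw [hcolon₁]
      intro k
      have hXk := (hcolonS _ _).1 hsoc (Sum.inl k)
      rw [hXmul] at hXk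
      obtain ⟨i', j', hij', hXL, hXR⟩ := (hkey _ _).1 hXk
      rw [hdLshift_inl] at hXL
      rw [hdRshift_inl] at hXR
      have hj' : j' ≤ j := by
        by_contra hlt
        exact hn2 (Ideal.pow_le_pow_right (by omega) hXR)
      rw [hXmul]
      exact Ideal.pow_le_pow_right (by omega) hXL
    · rw [hcolon₂]
      intro k
      have hXk := (hcolonS _ _).1 hsoc (Sum.inr k)
      rw [hXmul] at hXk
      obtain ⟨i', j', hij', hXL, hXR⟩ := (hkey _ _).1 hXk
      rw [hdLshift_inr] at hXL
      rw [hdRshift_inr] at hXR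
      have hi' : i' ≤ i := by
        by_contra hlt
        exact hn1 (Ideal.pow_le_pow_right (by omega) hXL)
      rw [hXmul]
      exact Ideal.pow_le_pow_right (by omega) hXR
  · rintro ⟨d₁, d₂, r, s, hr, hs, hrs, heq, hc1, hn1, hc2, hn2⟩
    obtain ⟨r', rfl⟩ : ∃ r', r = r' + 1 := ⟨r - 1, by omega⟩
    obtain ⟨s', rfl⟩ : ∃ s', s = s' + 1 := ⟨s - 1, by omega⟩
    have hd : d = Finsupp.mapDomain Sum.inl d₁ + Finsupp.mapDomain Sum.inr d₂ := by
      rw [rename_monomial, rename_monomial, monomial_mul, one_mul] at heq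
      rcases (monomial_eq_monomial_iff _ _ _ _).1 heq with ⟨h, -⟩ | ⟨h, -⟩
      · exact h
      · exact absurd h one_ne_zero
    have hdLd : dL d = d₁ := by rw [hd, hdLsum]
    have hdRd : dR d = d₂ := by rw [hd, hdRsum]
    have h0A : (0 : Fin p →₀ ℕ) ∉ A := by
      intro h0
      apply hn1
      rw [hA]
      exact mem_mId_pow.2 ⟨0, Set.zero_mem_nsmul h0, zero_le⟩
    have h0B : (0 : Fin q →₀ ℕ) ∉ B := by
      intro h0
      apply hn2
      rw [hB]
      exact mem_mId_pow.2 ⟨0, Set.zero_mem_nsmul h0, zero_le⟩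
    have hI₁le : I₁ ≤ m₁ := by
      rw [hA, hm₁]
      exact mId_le_maximal h0A
    have hI₂le : I₂ ≤ m₂ := by
      rw [hB, hm₂]
      exact mId_le_maximal h0B
    have hu₁ : monomial d₁ (1 : K) ∈ I₁ ^ r' := by
      have h1 : monomial d₁ (1 : K) ∈ (I₁ ^ (r' + 1)).colon I₁ :=
        Submodule.colon_mono le_rfl hI₁le hc1
      rwa [hR₁ r'] at h1
    have hu₂ : monomial d₂ (1 : K) ∈ I₂ ^ s' := by
      have h1 : monomial d₂ (1 : K) ∈ (I₂ ^ (s' + 1)).colon I₂ :=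
        Submodule.colon_mono le_rfl hI₂le hc2
      rwa [hR₂ s'] at h1
    constructor
    · rw [hcolonS]
      rintro (x | y)
      · rw [hXmul]
        apply (hkey _ _).2
        refine ⟨r' + 1, s', by omega, ?_, ?_⟩
        · rw [hdLshift_inl, hdLd]
          have h1 := (hcolon₁ _ _).1 hc1 x
          rwa [hXmul] at h1
        · rw [hdRshift_inl, hdRd]
          exact hu₂
      · rw [hXmul]
        apply (hkey _ _).2
        refine ⟨r', s' + 1, by omega, ?_, ?_⟩
        · rw [hdLshift_inr, hdLd]
          exact hu₁
        · rw [hdRshift_inr, hdRd]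
          have h1 := (hcolon₂ _ _).1 hc2 y
          rwa [hXmul] at h1
    · intro hmem
      obtain ⟨i, j, hij, hL, hRm⟩ := (hkey d (m' + 1)).1 hmem
      rw [hdLd] at hL
      rw [hdRd] at hRm
      have hi : i ≤ r' := by
        by_contra h
        exact hn1 (Ideal.pow_le_pow_right (by omega) hL)
      have hj : j ≤ s' := by
        by_contra h
        exact hn2 (Ideal.pow_le_pow_right (by omega) hRm)
      omega
end

section
/- Let G be a simple graph with edge ideal I = I(G) ⊆ S, let m ≥ 1 be an integer, let e₁, e₂, …, e_m be edges of G (repetitions allowed) and let v ∈ S be a monomial such that e₁e₂⋯e_m·v ∈ I^{m+1} (each edge identified with its degree-2 monomial). Then there exist variables w and y with wy dividing v, an integer t ≥ 0, and a walk in G of odd length w = z₁ − z₂ − z₃ − ⋯ − z_{2t} − z_{2t+1} − z_{2t+2} = y such that the multiset {{z₂z₃, z₄z₅, …, z_{2t}z_{2t+1}}} is contained in the multiset {{e₁,…,e_m}}. (For t = 0 the walk is the single edge wy.) -/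
/-!
Read monomials as multisets of variables. A monomial lies in `I(G)^k` exactly when it is divisible
by a product of `k` edges, so the hypothesis yields a multiset `R` of `m + 1` edges of `G` whose
endpoints are contained in those of `B = {{e₁, …, e_m}}` plus `v`. Since `R` has more endpoints
than `B`, some endpoint `u` of an edge `uu₁ ∈ R` divides `v`. If `u₁` divides `v` as well, the edge
`uu₁` is the walk. Otherwise `u₁` is an endpoint of some `u₁u₂ ∈ B`. Removing `uu₁` from `R` and
`u₁u₂` from `B`, and trading `u` for `u₂` in `v`, gives a smaller instance. Either both ends of its
walk already divide `v`, or one end is `u₂` and prefixing `u − u₁` gives the walk sought.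
-/

open MvPolynomial

/-- The monomial `X i * X j` attached to an edge of a graph. -/
noncomputable def edgeMon {n : ℕ} (K : Type*) [Field K] :
    Sym2 (Fin n) → MvPolynomial (Fin n) K :=
  Sym2.lift ⟨fun i j => X i * X j, fun _ _ => mul_comm _ _⟩

lemma Multiset.map_range_succ {α : Type*} (f : ℕ → α) (n : ℕ) :
    (range (n + 1)).map f = f 0 ::ₘ (range n).map (fun i => f (i + 1)) := by
  simp [Multiset.range, List.range_succ_eq_map, Function.comp_def]

lemma Multiset.map_range_reflect {α : Type*} (f : ℕ → α) (n : ℕ) :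
    (range n).map (fun i => f (n - 1 - i)) = (range n).map f := by
  have h (g : ℕ → α) : (range n).map g = ∑ i ∈ Finset.range n, {g i} := by
    rw [Finset.sum_eq_multiset_sum, Finset.range_val, ← Multiset.sum_map_singleton (map g _),
      Multiset.map_map]
    rfl
  rw [h, h, Finset.sum_range_reflect (fun i => ({f i} : Multiset α))]

lemma Multiset.toFinsupp_le_toFinsupp {α : Type*} [DecidableEq α] {s t : Multiset α} :
    toFinsupp s ≤ toFinsupp t ↔ s ≤ t := by
  rw [← Finsupp.coe_orderIsoMultiset_symm, OrderIso.le_iff_le]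

section Endpoints

variable {V : Type*}

def endpoints (F : Multiset (Sym2 V)) : Multiset V := F.bind Sym2.toMultiset

@[simp] lemma endpoints_cons (a b : V) (F : Multiset (Sym2 V)) :
    endpoints (s(a, b) ::ₘ F) = a ::ₘ b ::ₘ endpoints F := by
  simp only [endpoints, Multiset.cons_bind, Sym2.toMultiset, Sym2.lift_mk]
  rw [← Multiset.cons_coe, ← Multiset.cons_coe, Multiset.cons_add, Multiset.cons_add,
    Multiset.coe_nil, zero_add]

lemma card_endpoints (F : Multiset (Sym2 V)) :
    Multiset.card (endpoints F) = 2 * Multiset.card F := by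
  simp [endpoints, Multiset.card_bind, Sym2.card_toMultiset, mul_comm]

lemma mem_endpoints {F : Multiset (Sym2 V)} {x : V} : x ∈ endpoints F ↔ ∃ f ∈ F, x ∈ f := by
  simp [endpoints]

namespace SimpleGraph

/-- Odd walks from `w` to `y` whose second, fourth, … edges form a submultiset of `B`. -/
def AltReachable (G : SimpleGraph V) (B : Multiset (Sym2 V)) (w y : V) : Prop :=
  ∃ (t : ℕ) (z : ℕ → V), z 0 = w ∧ z (2 * t + 1) = y ∧
    (∀ i < 2 * t + 1, G.Adj (z i) (z (i + 1))) ∧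
    (Multiset.range t).map (fun i => s(z (2 * i + 1), z (2 * i + 2))) ≤ B

variable {G : SimpleGraph V} {B B' : Multiset (Sym2 V)} {u u₁ u₂ w y : V}

lemma Adj.altReachable (h : G.Adj w y) : G.AltReachable B w y :=
  ⟨0, fun k => if k = 0 then w else y, rfl, rfl, fun i hi => by simpa [Nat.lt_one_iff.mp hi],
    by simp⟩

lemma AltReachable.mono (hBB' : B ≤ B') (h : G.AltReachable B w y) : G.AltReachable B' w y :=
  let ⟨t, z, h0, h1, hadj, hB⟩ := h
  ⟨t, z, h0, h1, hadj, hB.trans hBB'⟩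

lemma AltReachable.symm (h : G.AltReachable B w y) : G.AltReachable B y w := by
  obtain ⟨t, z, h0, h1, hadj, hB⟩ := h
  refine ⟨t, fun k => z (2 * t + 1 - k), by simpa, by simpa, fun i hi => ?_, ?_⟩
  · have := (hadj (2 * t - i) (by omega)).symm
    rwa [show 2 * t - i + 1 = 2 * t + 1 - i by omega,
      show 2 * t - i = 2 * t + 1 - (i + 1) by omega] at this
  · convert hB using 1
    rw [← Multiset.map_range_reflect (fun i => s(z (2 * i + 1), z (2 * i + 2)))]
    refine Multiset.map_congr rfl fun i hi => ?_
    rw [Multiset.mem_range] at hi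
    rw [Sym2.eq_swap]
    congr 2 <;> dsimp only <;> congr 1 <;> omega

lemma AltReachable.cons (h₁ : G.Adj u u₁) (h₂ : G.Adj u₁ u₂) (h : G.AltReachable B u₂ y) :
    G.AltReachable (s(u₁, u₂) ::ₘ B) u y := by
  obtain ⟨t, z, h0, h1, hadj, hB⟩ := h
  refine ⟨t + 1, fun | 0 => u | 1 => u₁ | k + 2 => z k, rfl, h1, fun i hi => ?_, ?_⟩
  · match i with
    | 0 => exact h₁
    | 1 => simpa [h0] using h₂
    | k + 2 => exact hadj k (by omega)
  · rw [Multiset.map_range_succ]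
    subst h0
    exact Multiset.cons_le_cons _ hB

variable [DecidableEq V] {R : Multiset (Sym2 V)} {v : Multiset V}

lemma exists_edge_at_excess_vertex (hcard : Multiset.card R = Multiset.card B + 1)
    (hle : endpoints R ≤ endpoints B + v) : ∃ u u₁, s(u, u₁) ∈ R ∧ u ∈ v := by
  have hsub : endpoints R - endpoints B ≠ 0 := by
    intro h
    have := Multiset.card_le_card (tsub_eq_zero_iff_le.mp h)
    rw [card_endpoints, card_endpoints] at this
    omega
  obtain ⟨u, hu⟩ := Multiset.exists_mem_of_ne_zero hsub
  obtain ⟨f, hf, huf⟩ := mem_endpoints.mp (Multiset.mem_of_le (Multiset.sub_le_self _ _) hu)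
  obtain ⟨u₁, rfl⟩ := Sym2.mem_iff_exists.mp huf
  exact ⟨u, u₁, hf, Multiset.mem_of_le (Multiset.sub_le_iff_le_add.mpr (by rwa [add_comm])) hu⟩

lemma endpoints_le_of_cons_le (hu : u ∈ v)
    (h : endpoints (s(u, u₁) ::ₘ R) ≤ endpoints (s(u₁, u₂) ::ₘ B) + v) :
    endpoints R ≤ endpoints B + u₂ ::ₘ v.erase u := by
  rw [← Multiset.cons_erase hu] at h
  simp only [endpoints_cons, Multiset.cons_add, Multiset.add_cons,
    Multiset.cons_le_cons_iff] at h
  rwa [Multiset.add_cons]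

lemma exists_pair_le_altReachable_cons (hu : u ∈ v) (h₁ : G.Adj u u₁) (h₂ : G.Adj u₁ u₂)
    (hwy : {w, y} ≤ u₂ ::ₘ v.erase u) (h : G.AltReachable B w y) :
    ∃ w y, {w, y} ≤ v ∧ G.AltReachable (s(u₁, u₂) ::ₘ B) w y := by
  have extend (y : V) (hy : {u₂, y} ≤ u₂ ::ₘ v.erase u) (h : G.AltReachable B u₂ y) :
      ∃ w y, {w, y} ≤ v ∧ G.AltReachable (s(u₁, u₂) ::ₘ B) w y := by
    refine ⟨u, y, ?_, h.cons h₁ h₂⟩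
    rw [Multiset.insert_eq_cons, Multiset.cons_le_cons_iff] at hy
    rw [Multiset.insert_eq_cons, ← Multiset.cons_erase hu]
    exact Multiset.cons_le_cons u hy
  by_cases hw : w = u₂
  · subst hw
    exact extend y hwy h
  by_cases hy : y = u₂
  · subst hy
    exact extend w (Multiset.pair_comm w y ▸ hwy) h.symm
  refine ⟨w, y, ?_, h.mono (Multiset.le_cons_self _ _)⟩
  have : u₂ ∉ ({w, y} : Multiset V) := by simp [Ne.symm hw, Ne.symm hy]
  exact ((Multiset.le_cons_of_notMem this).mp hwy).trans (Multiset.erase_le _ _)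

theorem exists_altReachable_of_endpoints_le (hR : ∀ f ∈ R, f ∈ G.edgeSet)
    (hB : ∀ f ∈ B, f ∈ G.edgeSet) (hcard : Multiset.card R = Multiset.card B + 1)
    (hle : endpoints R ≤ endpoints B + v) : ∃ w y, {w, y} ≤ v ∧ G.AltReachable B w y := by
  induction B using Multiset.strongInductionOn generalizing R v with
  | _ B ih =>
  obtain ⟨u, u₁, hRu, hu⟩ := exists_edge_at_excess_vertex hcard hle
  have h₁ : G.Adj u u₁ := hR _ hRu
  by_cases hu₁ : u₁ ∈ v
  · refine ⟨u, u₁, ?_, h₁.altReachable⟩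
    rw [Multiset.insert_eq_cons, ← Multiset.cons_erase hu, Multiset.cons_le_cons_iff,
      Multiset.singleton_le]
    exact (Multiset.mem_erase_of_ne h₁.ne.symm).mpr hu₁
  have hu₁B : u₁ ∈ endpoints B := by
    have : u₁ ∈ endpoints R := mem_endpoints.mpr ⟨_, hRu, Sym2.mem_mk_right u u₁⟩
    simpa [hu₁] using Multiset.mem_of_le hle this
  obtain ⟨f, hBf, hu₁f⟩ := mem_endpoints.mp hu₁B
  obtain ⟨u₂, rfl⟩ := Sym2.mem_iff_exists.mp hu₁f
  rw [← Multiset.cons_erase hRu, ← Multiset.cons_erase hBf] at hle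
  rw [← Multiset.cons_erase hRu, ← Multiset.cons_erase hBf] at hcard
  obtain ⟨w, y, hwy, hwalk⟩ := ih _ (Multiset.erase_lt.mpr hBf)
    (fun f hf => hR f (Multiset.mem_of_mem_erase hf))
    (fun f hf => hB f (Multiset.mem_of_mem_erase hf))
    (by simpa using hcard) (endpoints_le_of_cons_le hu hle)
  rw [← Multiset.cons_erase hBf]
  exact exists_pair_le_altReachable_cons hu h₁ (hB _ hBf) hwy hwalk

end SimpleGraph

end Endpoints

section EdgeIdeal

variable {σ R : Type*} [DecidableEq σ] [CommSemiring R]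

lemma X_mul_X_eq_monomial (i j : σ) :
    (X i * X j : MvPolynomial σ R) = monomial (Multiset.toFinsupp {i, j}) 1 := by
  rw [X, X, monomial_mul, one_mul, Multiset.insert_eq_cons, ← Multiset.singleton_add,
    Multiset.toFinsupp_add, Multiset.toFinsupp_singleton, Multiset.toFinsupp_singleton]

lemma X_mul_X_dvd_monomial {i j : σ} {s : Multiset σ} (h : {i, j} ≤ s) :
    (X i * X j : MvPolynomial σ R) ∣ monomial (Multiset.toFinsupp s) 1 := by
  rw [X_mul_X_eq_monomial]
  exact monomial_dvd_monomial.mpr ⟨Or.inr (Multiset.toFinsupp_le_toFinsupp.mpr h), dvd_rfl⟩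

lemma span_edges_pow_le (G : SimpleGraph σ) (k : ℕ) :
    Ideal.span {f | ∃ i j, G.Adj i j ∧ f = (X i * X j : MvPolynomial σ R)} ^ k ≤
      Ideal.span ((fun d => monomial d (1 : R)) '' {d | ∃ F : Multiset (Sym2 σ),
        (∀ f ∈ F, f ∈ G.edgeSet) ∧ Multiset.card F = k ∧
          d = Multiset.toFinsupp (endpoints F)}) := by
  induction k with
  | zero =>
    rw [pow_zero, Ideal.one_eq_top, top_le_iff, Ideal.eq_top_iff_one]
    exact Ideal.subset_span ⟨0, ⟨0, by simp, rfl, by simp [endpoints]⟩, rfl⟩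
  | succ k ih =>
    refine (Ideal.mul_mono_left ih).trans ?_
    rw [Ideal.span_mul_span', Ideal.span_le]
    rintro _ ⟨_, ⟨_, ⟨F, hF, rfl, rfl⟩, rfl⟩, _, ⟨i, j, hij, rfl⟩, rfl⟩
    refine Ideal.subset_span ⟨_, ⟨s(i, j) ::ₘ F, ?_, by simp, rfl⟩, ?_⟩
    · exact Multiset.forall_mem_cons.mpr ⟨hij, hF⟩
    · show (monomial _ 1 : MvPolynomial σ R) = monomial _ 1 * (X i * X j)
      rw [X_mul_X_eq_monomial, monomial_mul, one_mul, ← Multiset.toFinsupp_add,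
        endpoints_cons, add_comm, Multiset.insert_eq_cons, Multiset.cons_add,
        Multiset.singleton_add]

lemma exists_edges_le_of_monomial_mem_span_edges_pow [Nontrivial R] {G : SimpleGraph σ} {k : ℕ}
    {s : Multiset σ}
    (h : monomial (Multiset.toFinsupp s) (1 : R) ∈
      Ideal.span {f | ∃ i j, G.Adj i j ∧ f = (X i * X j : MvPolynomial σ R)} ^ k) :
    ∃ F : Multiset (Sym2 σ),
      (∀ f ∈ F, f ∈ G.edgeSet) ∧ Multiset.card F = k ∧ endpoints F ≤ s := by
  obtain ⟨_, ⟨F, hF, hk, rfl⟩, hle⟩ :=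
    mem_ideal_span_monomial_image.mp (span_edges_pow_le G k h) (Multiset.toFinsupp s) (by simp)
  exact ⟨F, hF, hk, Multiset.toFinsupp_le_toFinsupp.mp hle⟩

end EdgeIdeal

lemma edgeMon_eq_monomial {n : ℕ} (K : Type*) [Field K] (f : Sym2 (Fin n)) :
    edgeMon K f = monomial (Multiset.toFinsupp f.toMultiset) 1 := by
  induction f using Sym2.ind with
  | _ i j => exact X_mul_X_eq_monomial i j

lemma prod_edgeMon {n : ℕ} (K : Type*) [Field K] {ι : Type*} (s : Finset ι)
    (e : ι → Sym2 (Fin n)) :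
    ∏ i ∈ s, edgeMon K (e i) = monomial (Multiset.toFinsupp (endpoints (s.val.map e))) 1 := by
  simp_rw [edgeMon_eq_monomial, ← monomial_sum_one, ← map_sum]
  rw [endpoints, Multiset.bind, Multiset.join, Multiset.map_map, Finset.sum_eq_multiset_sum]
  rfl

theorem banerjee_lemma_general
    {K : Type*} [Field K] {n : ℕ} (G : SimpleGraph (Fin n))
    (I : Ideal (MvPolynomial (Fin n) K))
    (hI : I = Ideal.span {f | ∃ i j, G.Adj i j ∧ f = X i * X j})
    (m : ℕ) (e : Fin m → Sym2 (Fin n)) (he : ∀ i, e i ∈ G.edgeSet)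
    (dv : Fin n →₀ ℕ)
    (hmem : (∏ i, edgeMon K (e i)) * monomial dv (1 : K) ∈ I ^ (m + 1)) :
    ∃ w y : Fin n, (X w * X y : MvPolynomial (Fin n) K) ∣ monomial dv (1 : K) ∧
      ∃ (t : ℕ) (z : ℕ → Fin n), z 0 = w ∧ z (2 * t + 1) = y ∧
        (∀ i < 2 * t + 1, G.Adj (z i) (z (i + 1))) ∧
        (Multiset.range t).map (fun i => s(z (2 * i + 1), z (2 * i + 2))) ≤
          Finset.univ.val.map e := by
  set B := Finset.univ.val.map e
  have hmonomial : (∏ i, edgeMon K (e i)) * monomial dv (1 : K) =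
      monomial (Multiset.toFinsupp (endpoints B + Finsupp.toMultiset dv)) 1 := by
    rw [prod_edgeMon, monomial_mul, one_mul, Multiset.toFinsupp_add,
      Finsupp.toMultiset_toFinsupp]
  rw [hmonomial, hI] at hmem
  obtain ⟨F, hF, hcard, hle⟩ := exists_edges_le_of_monomial_mem_span_edges_pow hmem
  obtain ⟨w, y, hwy, hwalk⟩ := SimpleGraph.exists_altReachable_of_endpoints_le hF
    (Multiset.forall_mem_map_iff.mpr fun i _ => he i) (by simp [hcard]) hle
  exact ⟨w, y, Finsupp.toMultiset_toFinsupp dv ▸ X_mul_X_dvd_monomial hwy, hwalk⟩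

/-- Banerjee's lemma: if `e₁⋯e_m · v ∈ I(G)^{m+1}` for edges `e₁,…,e_m` of `G`
and a monomial `v`, then there are variables `w, y` with `wy ∣ v` and a walk of odd length
`w = z₁ - z₂ - ⋯ - z_{2t+2} = y` in `G` whose edges `z₂z₃, z₄z₅, …, z_{2t}z_{2t+1}`, as a
multiset, are contained in the multiset `{{e₁,…,e_m}}`. -/
theorem banerjee_lemma
    {K : Type*} [Field K] {n : ℕ} (G : SimpleGraph (Fin n))
    (I : Ideal (MvPolynomial (Fin n) K))
    (hI : I = Ideal.span {f | ∃ i j, G.Adj i j ∧ f = X i * X j})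
    (m : ℕ) (hm : 1 ≤ m) (e : Fin m → Sym2 (Fin n)) (he : ∀ i, e i ∈ G.edgeSet)
    (dv : Fin n →₀ ℕ)
    (hmem : (∏ i, edgeMon K (e i)) * monomial dv (1 : K) ∈ I ^ (m + 1)) :
    ∃ w y : Fin n, (X w * X y : MvPolynomial (Fin n) K) ∣ monomial dv (1 : K) ∧
      ∃ (t : ℕ) (z : ℕ → Fin n), z 0 = w ∧ z (2 * t + 1) = y ∧
        (∀ i < 2 * t + 1, G.Adj (z i) (z (i + 1))) ∧
        (Multiset.range t).map (fun i => s(z (2 * i + 1), z (2 * i + 2))) ≤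
          Finset.univ.val.map e :=
  banerjee_lemma_general G I hI m e he dv hmem
end

section
/- Let G be a simple connected nonbipartite graph and let H be a spanning unicyclic nonbipartite subgraph of G, whose unique (odd) cycle has length 2k+1. Then u_H ∈ (I(G)^{d_H} : 𝔪) \ I(G)^{d_H}. Consequently, the least integer m ≥ 1 with (I(G)ᵐ : 𝔪) ≠ I(G)ᵐ is at most min{ d_H : H is a spanning unicyclic nonbipartite subgraph of G }. -/
open MvPolynomial

/-- An edge is a leaf if one of its endpoints is adjacent to exactly one vertex. -/
def IsLeafEdge {n : ℕ} (G : SimpleGraph (Fin n)) (e : Sym2 (Fin n)) : Prop :=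
  ∃ x, x ∈ e ∧ ∃! y, G.Adj x y

namespace DstabAux
variable {n : ℕ} {K : Type*} [Field K]

def sym2vars : Sym2 (Fin n) → Multiset (Fin n) :=
  Sym2.lift ⟨fun i j => {i, j}, fun i j => by
    simp [Multiset.insert_eq_cons]; exact Multiset.cons_swap i j 0⟩

noncomputable def mprod (s : Multiset (Fin n)) : MvPolynomial (Fin n) K :=
  (s.map X).prod

@[simp] lemma mprod_zero : (mprod 0 : MvPolynomial (Fin n) K) = 1 := by simp [mprod]

@[simp] lemma mprod_cons (a : Fin n) (s : Multiset (Fin n)) :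
    (mprod (a ::ₘ s) : MvPolynomial (Fin n) K) = X a * mprod s := by simp [mprod]

@[simp] lemma mprod_add (s t : Multiset (Fin n)) :
    (mprod (s + t) : MvPolynomial (Fin n) K) = mprod s * mprod t := by
  simp [mprod]

@[simp] lemma mprod_singleton (a : Fin n) : (mprod {a} : MvPolynomial (Fin n) K) = X a := by
  simp [mprod]

lemma mprod_coe (L : List (Fin n)) :
    (mprod (↑L : Multiset (Fin n)) : MvPolynomial (Fin n) K) = (L.map X).prod := by
  simp [mprod]

lemma edgeMon_eq (e : Sym2 (Fin n)) : edgeMon K e = mprod (sym2vars e) := by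
  induction e using Sym2.ind with
  | _ i j => simp [edgeMon, sym2vars, mprod]

@[simp] lemma sym2vars_mk (i j : Fin n) : sym2vars s(i, j) = {i, j} := rfl

@[simp] lemma card_sym2vars (e : Sym2 (Fin n)) : Multiset.card (sym2vars e) = 2 := by
  induction e using Sym2.ind with
  | _ i j => simp [Multiset.insert_eq_cons]



def deg (σ : Fin n →₀ ℕ) : ℕ := σ.sum fun _ k => k

lemma deg_add (σ τ : Fin n →₀ ℕ) : deg (σ + τ) = deg σ + deg τ := by
  simp [deg, Finsupp.sum_add_index']

lemma deg_single (i : Fin n) : deg (Finsupp.single i 1) = 1 := by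
  simp [deg, Finsupp.sum_single_index]

def lowZero (e : ℕ) : Ideal (MvPolynomial (Fin n) K) where
  carrier := {f | ∀ σ : Fin n →₀ ℕ, deg σ < e → coeff σ f = 0}
  add_mem' := fun hf hg σ hσ => by simp [coeff_add, hf σ hσ, hg σ hσ]
  zero_mem' := fun σ _ => by simp
  smul_mem' := fun c f hf σ hσ => by
    rw [smul_eq_mul, coeff_mul]
    apply Finset.sum_eq_zero
    rintro ⟨u, w⟩ huw
    rw [Finset.HasAntidiagonal.mem_antidiagonal] at huw
    have : deg w < e := by
      have := deg_add u w
      rw [huw] at this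
      omega
    simp [hf w this]

lemma mem_lowZero {e : ℕ} {f : MvPolynomial (Fin n) K} :
    f ∈ lowZero e ↔ ∀ σ : Fin n →₀ ℕ, deg σ < e → coeff σ f = 0 := Iff.rfl

lemma lowZero_mul (a b : ℕ) :
    (lowZero a : Ideal (MvPolynomial (Fin n) K)) * lowZero b ≤ lowZero (a + b) := by
  rw [Ideal.mul_le]
  intro f hf g hg σ hσ
  rw [coeff_mul]
  apply Finset.sum_eq_zero
  rintro ⟨u, w⟩ huw
  rw [Finset.HasAntidiagonal.mem_antidiagonal] at huw
  have hd : deg u + deg w < a + b := by rw [← deg_add, huw]; exact hσ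
  rcases lt_or_ge (deg u) a with h | h
  · simp [hf u h]
  · have : deg w < b := by omega
    simp [hg w this]

lemma pow_le_lowZero {I : Ideal (MvPolynomial (Fin n) K)} (h : I ≤ lowZero 2) (d : ℕ) :
    I ^ d ≤ lowZero (2 * d) := by
  induction d with
  | zero => intro f _; intro σ hσ; omega
  | succ d ih =>
      rw [pow_succ]
      calc I ^ d * I ≤ lowZero (2 * d) * lowZero 2 := Ideal.mul_mono ih h
        _ ≤ lowZero (2 * d + 2) := lowZero_mul _ _
        _ = lowZero (2 * (d + 1)) := by ring_nf

lemma XX_mem_lowZero (i j : Fin n) : (X i * X j : MvPolynomial (Fin n) K) ∈ lowZero 2 := by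
  intro σ hσ
  rw [X, X, monomial_mul, coeff_monomial]
  split
  · next heq =>
      exfalso
      rw [← heq, deg_add, deg_single, deg_single] at hσ
      omega
  · rfl

lemma mprod_eq_monomial (s : Multiset (Fin n)) :
    (mprod s : MvPolynomial (Fin n) K) = monomial s.toFinsupp 1 := by
  induction s using Multiset.induction with
  | empty => simp [monomial_zero']
  | cons a s ih =>
      rw [mprod_cons, ih, X, monomial_mul, one_mul]
      congr 1
      rw [← Multiset.singleton_add, Multiset.toFinsupp_add, Multiset.toFinsupp_singleton]

lemma deg_toFinsupp (s : Multiset (Fin n)) : deg s.toFinsupp = Multiset.card s := by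
  induction s using Multiset.induction with
  | empty => simp [deg]
  | cons a s ih =>
      rw [← Multiset.singleton_add, Multiset.toFinsupp_add, deg_add, Multiset.toFinsupp_singleton,
        deg_single, ih, Multiset.card_add]
      simp [add_comm]

def evars (l : Multiset (Sym2 (Fin n))) : Multiset (Fin n) := (l.map sym2vars).sum

@[simp] lemma evars_zero : (evars (0 : Multiset (Sym2 (Fin n)))) = 0 := rfl

@[simp] lemma evars_cons (e : Sym2 (Fin n)) (l : Multiset (Sym2 (Fin n))) :
    evars (e ::ₘ l) = sym2vars e + evars l := by simp [evars]

@[simp] lemma evars_add (l l' : Multiset (Sym2 (Fin n))) :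
    evars (l + l') = evars l + evars l' := by simp [evars]

@[simp] lemma evars_coe_cons (e : Sym2 (Fin n)) (L : List (Sym2 (Fin n))) :
    evars ↑(e :: L) = sym2vars e + evars ↑L := by
  rw [← Multiset.cons_coe, evars_cons]

@[simp] lemma evars_singleton (e : Sym2 (Fin n)) : evars {e} = sym2vars e := by
  simp [evars]

lemma sym2vars_pair (i j : Fin n) : sym2vars s(i, j) = {i} + {j} := rfl

lemma card_evars (l : Multiset (Sym2 (Fin n))) :
    Multiset.card (evars l) = 2 * Multiset.card l := by
  induction l using Multiset.induction with
  | empty => simp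
  | cons e l ih => simp [ih, Nat.mul_add]; omega

lemma edgeMon_mem_span {G : SimpleGraph (Fin n)} {e : Sym2 (Fin n)} (he : e ∈ G.edgeSet) :
    (edgeMon K e : MvPolynomial (Fin n) K) ∈
      Ideal.span {f : MvPolynomial (Fin n) K | ∃ i j, G.Adj i j ∧ f = X i * X j} := by
  induction e using Sym2.ind with
  | _ i j =>
      refine Ideal.subset_span ⟨i, j, ?_, ?_⟩
      · exact he
      · simp [edgeMon]

lemma prod_mem_pow {G : SimpleGraph (Fin n)} (l : Multiset (Sym2 (Fin n)))
    (hl : ∀ e ∈ l, e ∈ G.edgeSet) :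
    (mprod (evars l) : MvPolynomial (Fin n) K) ∈
      (Ideal.span {f : MvPolynomial (Fin n) K | ∃ i j, G.Adj i j ∧ f = X i * X j})
        ^ Multiset.card l := by
  induction l using Multiset.induction with
  | empty => simp
  | cons e l ih =>
      rw [evars_cons, mprod_add, ← edgeMon_eq]
      have h1 : (edgeMon K e : MvPolynomial (Fin n) K) ∈ _ :=
        edgeMon_mem_span (K := K) (hl e (Multiset.mem_cons_self e l))
      have h2 := ih (fun e' he' => hl e' (Multiset.mem_cons_of_mem he'))
      rw [Multiset.card_cons, pow_succ']
      exact Ideal.mul_mem_mul h1 h2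

lemma evars_coe (L : List (Sym2 (Fin n))) :
    evars (↑L : Multiset (Sym2 (Fin n))) = (L.map sym2vars).sum := by
  induction L with
  | nil => simp
  | cons e L ih => rw [← Multiset.cons_coe, evars_cons, ih, List.map_cons, List.sum_cons]

lemma mprod_evars (l : Multiset (Sym2 (Fin n))) :
    (mprod (evars l) : MvPolynomial (Fin n) K) = (l.map (edgeMon K)).prod := by
  induction l using Multiset.induction with
  | empty => simp
  | cons e l ih => rw [evars_cons, mprod_add, ← edgeMon_eq, Multiset.map_cons,
      Multiset.prod_cons, ih]

lemma oddWalk {G : SimpleGraph (Fin n)} :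
    ∀ (m : ℕ) (a b : Fin n) (p : G.Walk a b), p.length = 2 * m + 1 →
      ∃ l : Multiset (Sym2 (Fin n)), (∀ e ∈ l, e ∈ G.edgeSet) ∧
        Multiset.card l = m + 1 ∧ evars l = (p.support : Multiset (Fin n)) := by
  intro m
  induction m with
  | zero =>
      intro a b p hp
      cases p with
      | nil => simp at hp
      | cons h q =>
          cases q with
          | nil =>
              refine ⟨{s(a, b)}, ?_, by simp, ?_⟩
              · intro e he
                rw [Multiset.mem_singleton] at he
                subst he; exact h
              · rfl
          | cons h' r => simp [SimpleGraph.Walk.length_cons] at hp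
  | succ m ih =>
      intro a b p hp
      cases p with
      | nil => simp at hp
      | @cons _ cc _ h q =>
          cases q with
          | nil => simp [SimpleGraph.Walk.length_cons] at hp
          | cons h' r =>
              have hr : r.length = 2 * m + 1 := by
                simp [SimpleGraph.Walk.length_cons] at hp; omega
              obtain ⟨l, hl1, hl2, hl3⟩ := ih _ _ r hr
              refine ⟨s(a, cc) ::ₘ l, ?_, by simp [hl2], ?_⟩
              · intro e he
                rcases Multiset.mem_cons.mp he with he | he
                · subst he; exact h
                · exact hl1 e he
              · rw [evars_cons, hl3]
                simp [SimpleGraph.Walk.support_cons, Multiset.insert_eq_cons]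

lemma path2 {G H : SimpleGraph (Fin n)} (hHG : H ≤ G) :
    ∀ (m : ℕ) (a b : Fin n) (p : H.Walk a b), p.length = m → 1 ≤ m →
      ∃ (l : Multiset (Sym2 (Fin n))) (w : Fin n),
        (∀ e ∈ l, e ∈ G.edgeSet) ∧ Multiset.card l = m ∧ (G.Adj w b ∨ w = b) ∧
        ({a} : Multiset (Fin n)) + evars (↑p.edges) = evars l + {w} := by
  intro m
  induction m using Nat.strong_induction_on with
  | _ m IH =>
  intro a b p hm h1
  cases p with
  | nil => simp at hm; omega
  | @cons _ cc _ h q =>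
    cases q with
    | nil =>
        refine ⟨{s(a, b)}, a, ?_, ?_, Or.inl (hHG h), ?_⟩
        · intro e he
          rw [Multiset.mem_singleton] at he
          subst he; exact hHG h
        · simp at hm ⊢; omega
        · simp [evars, Multiset.insert_eq_cons, ← Multiset.singleton_add]
          abel
    | @cons _ dd _ h' r =>
      cases r with
      | nil =>
          refine ⟨{s(a, cc), s(a, cc)}, b, ?_, ?_, Or.inr rfl, ?_⟩
          · intro e he
            simp [Multiset.insert_eq_cons] at he
            subst he; exact hHG h
          · simp [Multiset.insert_eq_cons] at hm ⊢; omega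
          · simp [evars, Multiset.insert_eq_cons, ← Multiset.singleton_add]
            abel
      | cons h'' r' =>
          have hr : (SimpleGraph.Walk.cons h'' r').length = m - 2 := by
            simp at hm ⊢; omega
          have hub : 1 ≤ m - 2 := by simp [SimpleGraph.Walk.length_cons] at hm; omega
          obtain ⟨l, w, hl1, hl2, hl3, hl4⟩ :=
            IH (m - 2) (by simp at hm; omega) _ _ (SimpleGraph.Walk.cons h'' r') hr hub
          refine ⟨s(a, cc) ::ₘ s(a, cc) ::ₘ l, w, ?_, ?_, hl3, ?_⟩
          · intro e he
            rcases Multiset.mem_cons.mp he with he | he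
            · subst he; exact hHG h
            rcases Multiset.mem_cons.mp he with he | he
            · subst he; exact hHG h
            · exact hl1 e he
          · rw [Multiset.card_cons, Multiset.card_cons, hl2]; omega
          · have key : evars (s(a, cc) ::ₘ s(a, cc) ::ₘ l) + {w}
                = sym2vars s(a, cc) + sym2vars s(a, cc)
                  + ({dd} + evars ↑(SimpleGraph.Walk.cons h'' r').edges) := by
              calc evars (s(a, cc) ::ₘ s(a, cc) ::ₘ l) + {w}
                  = sym2vars s(a, cc) + sym2vars s(a, cc) + (evars l + {w}) := by
                    rw [evars_cons, evars_cons]; abel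
                _ = _ := by rw [← hl4]
            rw [key, SimpleGraph.Walk.edges_cons, SimpleGraph.Walk.edges_cons,
              evars_coe_cons, evars_coe_cons]
            simp only [sym2vars_pair]
            abel

lemma path1 {G H : SimpleGraph (Fin n)} (hHG : H ≤ G) (m : ℕ) (a b : Fin n)
    (p : H.Walk a b) (hm : p.length = m) (h1 : 1 ≤ m) :
    ∃ (l : Multiset (Sym2 (Fin n))) (w : Fin n),
      (∀ e ∈ l, e ∈ G.edgeSet) ∧ Multiset.card l = m - 1 ∧ (G.Adj w b ∨ w = b) ∧
      ({a} : Multiset (Fin n)) + evars (↑p.edges.tail) = evars l + {w} := by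
  cases p with
  | nil => simp at hm; omega
  | @cons _ cc _ h q =>
    cases q with
    | nil =>
        refine ⟨0, a, by simp, by simp at hm ⊢; omega, Or.inl (hHG h), by simp⟩
    | @cons _ dd _ h' r =>
      cases r with
      | nil =>
          refine ⟨{s(a, cc)}, b, ?_, ?_, Or.inr rfl, ?_⟩
          · intro e he
            rw [Multiset.mem_singleton] at he
            subst he; exact hHG h
          · simp at hm ⊢; omega
          · simp only [SimpleGraph.Walk.edges_cons, SimpleGraph.Walk.edges_nil, List.tail_cons,
              evars_coe_cons, evars_singleton, sym2vars_pair, Multiset.coe_nil, evars_zero]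
            abel
      | cons h'' r' =>
          have hr : (SimpleGraph.Walk.cons h'' r').length = m - 2 := by
            simp at hm ⊢; omega
          have h1' : 1 ≤ m - 2 := by simp at hm; omega
          obtain ⟨l, w, hl1, hl2, hl3, hl4⟩ :=
            path2 hHG (m - 2) _ _ (SimpleGraph.Walk.cons h'' r') hr h1'
          refine ⟨s(a, cc) ::ₘ l, w, ?_, ?_, hl3, ?_⟩
          · intro e he
            rcases Multiset.mem_cons.mp he with he | he
            · subst he; exact hHG h
            · exact hl1 e he
          · rw [Multiset.card_cons, hl2]; omega
          · have key : evars (s(a, cc) ::ₘ l) + {w}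
                = sym2vars s(a, cc) + ({dd} + evars ↑(SimpleGraph.Walk.cons h'' r').edges) := by
              calc evars (s(a, cc) ::ₘ l) + {w}
                  = sym2vars s(a, cc) + (evars l + {w}) := by rw [evars_cons]; abel
                _ = _ := by rw [← hl4]
            rw [key, SimpleGraph.Walk.edges_cons, List.tail_cons, SimpleGraph.Walk.edges_cons,
              SimpleGraph.Walk.edges_cons, evars_coe_cons, evars_coe_cons]
            simp only [sym2vars_pair]
            abel

lemma support_mapLe {G H : SimpleGraph (Fin n)} (hHG : H ≤ G) {a b : Fin n} (p : H.Walk a b) :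
    (p.mapLe hHG).support = p.support := by
  simp [SimpleGraph.Walk.support_map]

lemma length_mapLe {G H : SimpleGraph (Fin n)} (hHG : H ≤ G) {a b : Fin n} (p : H.Walk a b) :
    (p.mapLe hHG).length = p.length := by
  simp [SimpleGraph.Walk.length_map]

lemma cyc_pair {G H : SimpleGraph (Fin n)} (hHG : H ≤ G) {k : ℕ} {v : Fin n} (c : H.Walk v v)
    (hc : c.IsCycle) (hlen : c.length = 2 * k + 1) {b : Fin n} (hb : b ∈ c.support) {w : Fin n}
    (hw : G.Adj w b ∨ w = b) :
    ∃ l : Multiset (Sym2 (Fin n)), (∀ e ∈ l, e ∈ G.edgeSet) ∧ Multiset.card l = k + 1 ∧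
      evars l = {w} + (↑c.support.tail : Multiset (Fin n)) := by
  set c' := c.rotate b hb with hc'def
  have hlen' : c'.length = 2 * k + 1 := by
    have h1 : c'.edges.length = c.edges.length :=
      (SimpleGraph.Walk.rotate_edges c b hb).perm.length_eq
    rw [SimpleGraph.Walk.length_edges, SimpleGraph.Walk.length_edges] at h1
    rw [h1, hlen]
  have hsupp : (↑c'.support.tail : Multiset (Fin n)) = ↑c.support.tail :=
    Multiset.coe_eq_coe.mpr (SimpleGraph.Walk.support_rotate c b hb).perm
  rcases hw with hw | hw
  · -- w adjacent to b in G
    cases hq : c' with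
    | nil => rw [hq] at hlen'; simp at hlen'
    | @cons _ x _ hadj q =>
        -- q : H.Walk x b, support.tail of c' is q.support
        have hqlen : (q.mapLe hHG).length = 2 * k := by
          rw [length_mapLe]
          have := hlen'
          rw [hq] at this
          simp at this
          omega
        have hodd : ((q.mapLe hHG).concat hw.symm).length = 2 * k + 1 := by
          rw [SimpleGraph.Walk.length_concat, hqlen]
        obtain ⟨l, hl1, hl2, hl3⟩ := oddWalk k _ _ ((q.mapLe hHG).concat hw.symm) hodd
        refine ⟨l, hl1, hl2, ?_⟩
        rw [hl3, SimpleGraph.Walk.support_concat, support_mapLe]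
        have htail : c'.support.tail = q.support := by rw [hq]; simp
        rw [← hsupp, htail]
        calc (↑(q.support ++ [w]) : Multiset (Fin n))
            = ↑(w :: q.support) := by
              refine Multiset.coe_eq_coe.mpr ?_
              exact List.perm_append_singleton _ _
          _ = {w} + ↑q.support := by
              rw [← Multiset.cons_coe, ← Multiset.singleton_add]
  · -- w = b : use the rotated cycle itself
    subst hw
    have hodd : (c'.mapLe hHG).length = 2 * k + 1 := by rw [length_mapLe, hlen']
    obtain ⟨l, hl1, hl2, hl3⟩ := oddWalk k _ _ (c'.mapLe hHG) hodd
    refine ⟨l, hl1, hl2, ?_⟩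
    rw [hl3, support_mapLe]
    have : c'.support = w :: c'.support.tail := by
      cases hq : c' with
      | nil => rw [hq] at hlen'; simp at hlen'
      | cons hadj q => simp
    rw [this, ← Multiset.cons_coe, ← Multiset.singleton_add, hsupp]

lemma cyc_two_nbrs {H : SimpleGraph (Fin n)} {k : ℕ} {v : Fin n} (c : H.Walk v v)
    (hc : c.IsCycle) (hlen : c.length = 2 * k + 1) (hk : 1 ≤ k) {b : Fin n}
    (hb : b ∈ c.support) : ∃ x y, x ≠ y ∧ H.Adj b x ∧ H.Adj b y := by
  have hc' : (c.rotate b hb).IsCycle := hc.rotate hb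
  have hlen' : (c.rotate b hb).length = 2 * k + 1 := by
    have h1 : (c.rotate b hb).edges.length = c.edges.length :=
      (SimpleGraph.Walk.rotate_edges c b hb).perm.length_eq
    rw [SimpleGraph.Walk.length_edges, SimpleGraph.Walk.length_edges] at h1
    rw [h1, hlen]
  set c' := c.rotate b hb with hc'def
  clear_value c'
  cases c' with
  | nil => simp at hlen'
  | @cons _ x _ hadj q =>
      have hqlen : q.length = 2 * k := by
        simp at hlen'; omega
      have hqsupp : q.support.Nodup := by
        have := hc'.support_nodup
        simpa using this
      -- decompose q from the b-end
      cases hrev : q.reverse with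
      | nil =>
          exfalso
          have : q.length = 0 := by
            have := congrArg SimpleGraph.Walk.length hrev
            simpa [SimpleGraph.Walk.length_reverse] using this
          omega
      | @cons _ y _ h2 q2 =>
          -- h2 : H.Adj b y, q2 : H.Walk y x
          refine ⟨x, y, ?_, hadj, h2⟩
          have hsupp2 : q.support = q2.reverse.support ++ [b] := by
            have h3 : q.reverse.support = b :: q2.support := by rw [hrev]; simp
            have h4 : q.support = q.reverse.support.reverse := by
              rw [SimpleGraph.Walk.support_reverse, List.reverse_reverse]
            rw [h4, h3]
            simp [SimpleGraph.Walk.support_reverse]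
          have hnodup : (q2.reverse.support ++ [b]).Nodup := hsupp2 ▸ hqsupp
          have hq2nodup : q2.reverse.support.Nodup := (List.nodup_append.mp hnodup).1
          cases hq2 : q2.reverse with
          | nil =>
              exfalso
              -- then x = y and q2.reverse : Walk x y is nil so q.support = [x, b]
              have : q.support.length = 2 := by
                rw [hsupp2, hq2]
                simp
              rw [SimpleGraph.Walk.length_support] at this
              omega
          | @cons _ x4 _ h4 r4 =>
              intro hxy
              have hy : y ∈ r4.support := SimpleGraph.Walk.end_mem_support r4
              have hxx : q2.reverse.support = x :: r4.support := by rw [hq2]; simp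
              rw [hxx, List.nodup_cons] at hq2nodup
              exact hq2nodup.1 (hxy ▸ hy)

lemma path_interior_two_nbrs {H : SimpleGraph (Fin n)} :
    ∀ {a b : Fin n} (p : H.Walk a b), p.IsPath → ∀ x ∈ p.support, x ≠ a → x ≠ b →
      ∃ y z, y ≠ z ∧ H.Adj x y ∧ H.Adj x z := by
  intro a b p
  induction p with
  | nil =>
      intro _ x hx hxa _
      simp at hx
      exact absurd hx hxa
  | @cons a a' b h q ih =>
      intro hp x hx hxa hxb
      have hq : q.IsPath := hp.of_cons
      rw [SimpleGraph.Walk.support_cons, List.mem_cons] at hx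
      rcases hx with hx | hx
      · exact absurd hx hxa
      by_cases hxa' : x = a'
      · subst hxa'
        cases q with
        | nil => exact absurd rfl hxb
        | @cons _ a'' _ h2 q2 =>
            refine ⟨a, a'', ?_, h.symm, h2⟩
            intro haa
            have : a ∈ (SimpleGraph.Walk.cons h2 q2).support := by
              rw [haa]
              simp
            have hnd := hp.support_nodup
            rw [SimpleGraph.Walk.support_cons, List.nodup_cons] at hnd
            exact hnd.1 this
      · exact ih hq x hx hxa' hxb

lemma exists_min_path {H : SimpleGraph (Fin n)} (hHconn : H.Connected) {v : Fin n}
    (c : H.Walk v v) (t : Fin n) :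
    ∃ (b : Fin n) (p : H.Walk t b), p.IsPath ∧ b ∈ c.support ∧
      (∀ x ∈ p.support, x ∈ c.support → x = b) := by
  classical
  have hex : ∃ m, ∃ b, b ∈ c.support ∧ ∃ p : H.Walk t b, p.IsPath ∧ p.length = m := by
    obtain ⟨p0⟩ := hHconn.preconnected t v
    exact ⟨(p0.toPath : H.Walk t v).length, v, c.start_mem_support, p0.toPath,
      p0.toPath.2, rfl⟩
  obtain ⟨b, hb, p, hp, hplen⟩ := Nat.find_spec hex
  refine ⟨b, p, hp, hb, ?_⟩
  intro x hx hxc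
  by_contra hxb
  have hdrop : 1 ≤ (p.dropUntil x hx).length := by
    rcases Nat.eq_zero_or_pos (p.dropUntil x hx).length with h0 | h0
    · exact absurd (SimpleGraph.Walk.eq_of_length_eq_zero h0) hxb
    · omega
  have hsplit : (p.takeUntil x hx).length + (p.dropUntil x hx).length = p.length := by
    rw [← SimpleGraph.Walk.length_append, SimpleGraph.Walk.take_spec]
  have hlt : (p.takeUntil x hx).length < Nat.find hex := by omega
  exact Nat.find_min hex hlt ⟨x, hxc, p.takeUntil x hx, hp.takeUntil hx, rfl⟩

lemma tail_edges_mem {H : SimpleGraph (Fin n)} {k : ℕ} {v : Fin n}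
    (c : H.Walk v v) (hc : c.IsCycle) (hlen : c.length = 2 * k + 1) (hk : 1 ≤ k)
    {t b : Fin n} (p : H.Walk t b) (hp : p.IsPath) (hb : b ∈ c.support)
    (hmin : ∀ x ∈ p.support, x ∈ c.support → x = b) :
    ∀ e ∈ p.edges.tail, e ∈ H.edgeSet ∧ e ∉ c.edges ∧ ¬ IsLeafEdge H e := by
  cases p with
  | nil => simp
  | @cons _ u _ h q =>
      intro e he
      rw [SimpleGraph.Walk.edges_cons, List.tail_cons] at he
      have hCL : ∀ z ∈ q.support, ∃ y' z', y' ≠ z' ∧ H.Adj z y' ∧ H.Adj z z' := by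
        intro z hz
        by_cases hzb : z = b
        · subst hzb
          exact cyc_two_nbrs c hc hlen hk hb
        · have hzt : z ≠ t := by
            intro hzt
            subst hzt
            have hnd := hp.support_nodup
            rw [SimpleGraph.Walk.support_cons, List.nodup_cons] at hnd
            exact hnd.1 hz
          have hzp : z ∈ (SimpleGraph.Walk.cons h q).support := by
            rw [SimpleGraph.Walk.support_cons]
            exact List.mem_cons_of_mem _ hz
          exact path_interior_two_nbrs _ hp z hzp hzt hzb
      induction e using Sym2.ind with
      | _ x y =>
          have hadj : H.Adj x y := q.adj_of_mem_edges he
          have hxs : x ∈ q.support := q.fst_mem_support_of_mem_edges he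
          have hys : y ∈ q.support := q.snd_mem_support_of_mem_edges he
          refine ⟨q.edges_subset_edgeSet he, ?_, ?_⟩
          · intro hec
            by_cases hxb : x = b
            · have hyb : y ≠ b := by
                intro hyb
                exact hadj.ne (hxb.trans hyb.symm)
              have hyc : y ∈ c.support := c.snd_mem_support_of_mem_edges hec
              have hymem : y ∈ (SimpleGraph.Walk.cons h q).support := by
                rw [SimpleGraph.Walk.support_cons]
                exact List.mem_cons_of_mem _ hys
              exact hyb (hmin y hymem hyc)
            · have hxc : x ∈ c.support := c.fst_mem_support_of_mem_edges hec
              have hxmem : x ∈ (SimpleGraph.Walk.cons h q).support := by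
                rw [SimpleGraph.Walk.support_cons]
                exact List.mem_cons_of_mem _ hxs
              exact hxb (hmin x hxmem hxc)
          · rintro ⟨z, hz, yy, hyy, huni⟩
            rw [Sym2.mem_iff] at hz
            have hzs : z ∈ q.support := by
              rcases hz with hz | hz <;> subst hz <;> assumption
            obtain ⟨y', z', hne, h1, h2⟩ := hCL z hzs
            exact hne ((huni y' h1).trans (huni z' h2).symm)

end DstabAux

open DstabAux in
/-- If `G` is a connected nonbipartite graph and `H` is a spanning unicyclic
nonbipartite subgraph of `G` (with odd cycle of length `2k+1`), then
`u_H ∈ (I(G)^{d_H} : 𝔪) \ I(G)^{d_H}`; consequently the least `m ≥ 1` with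
`(I(G)ᵐ : 𝔪) ≠ I(G)ᵐ` is at most `d_H` (hence at most the minimum of the `d_H`). -/
theorem dstab_bound_of_spanning_unicyclic
    {K : Type*} [Field K] {n : ℕ} (G H : SimpleGraph (Fin n))
    (hGconn : G.Connected)
    -- `G` is nonbipartite
    (hGnb : ¬ ∃ f : Fin n → Bool, ∀ ⦃x y : Fin n⦄, G.Adj x y → f x ≠ f y)
    -- `H` is a spanning (connected, on the same vertex set) subgraph of `G`
    (hHG : H ≤ G) (hHconn : H.Connected)
    -- `H` is unicyclic with unique cycle `c`, which is odd of length `2k+1`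
    (k : ℕ) (v : Fin n) (c : H.Walk v v) (hc : c.IsCycle) (hlen : c.length = 2 * k + 1)
    (huniq : ∀ (w : Fin n) (p : H.Walk w w), p.IsCycle → ∀ e, e ∈ p.edges ↔ e ∈ c.edges)
    (I : Ideal (MvPolynomial (Fin n) K))
    (hI : I = Ideal.span {f | ∃ i j, G.Adj i j ∧ f = X i * X j})
    (mI : Ideal (MvPolynomial (Fin n) K)) (hmI : mI = Ideal.span (Set.range X))
    (Estar : Set (Sym2 (Fin n)))
    (hEstar : Estar = {e | e ∈ H.edgeSet ∧ e ∉ c.edges ∧ ¬ IsLeafEdge H e})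
    (dH : ℕ) (hdH : dH = Estar.ncard + k + 1)
    (uH : MvPolynomial (Fin n) K)
    (huH : uH = (c.support.tail.map X).prod * ∏ᶠ e ∈ Estar, edgeMon K e) :
    (uH ∈ (I ^ dH).colon mI ∧ uH ∉ I ^ dH) ∧
    ∃ m : ℕ, 1 ≤ m ∧ m ≤ dH ∧ (I ^ m).colon mI ≠ I ^ m := by
  classical
  have hk : 1 ≤ k := by have h3 := hc.three_le_length; omega
  have hfin : Estar.Finite := Set.toFinite _
  set F : Finset (Sym2 (Fin n)) := hfin.toFinset with hF
  have hFmem : ∀ e, e ∈ F ↔ e ∈ Estar := fun e => hfin.mem_toFinset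
  have hFcard : F.card = Estar.ncard := (Set.ncard_eq_toFinset_card Estar hfin).symm
  have hFG : ∀ e ∈ F, e ∈ G.edgeSet := by
    intro e he
    rw [hFmem, hEstar] at he
    exact SimpleGraph.edgeSet_mono hHG he.1
  have hcyccard : Multiset.card (↑c.support.tail : Multiset (Fin n)) = 2 * k + 1 := by
    rw [Multiset.coe_card, List.length_tail, SimpleGraph.Walk.length_support, hlen]
    omega
  have huH2 : uH = mprod ((↑c.support.tail : Multiset (Fin n)) + evars F.val) := by
    rw [huH, mprod_add, mprod_coe]
    congr 1
    rw [← hfin.coe_toFinset, finprod_mem_coe_finset, mprod_evars,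
      Finset.prod_eq_multiset_prod]
  -- main combinatorial claim
  have claimX : ∀ t : Fin n, X t * uH ∈ I ^ dH := by
    intro t
    obtain ⟨b, p, hp, hb, hmin⟩ := exists_min_path hHconn c t
    rcases Nat.eq_zero_or_pos p.length with hm0 | hm1
    · -- t is on the cycle
      have htb : t = b := SimpleGraph.Walk.eq_of_length_eq_zero hm0
      obtain ⟨lc, hlc1, hlc2, hlc3⟩ := cyc_pair hHG c hc hlen hb (Or.inr htb)
      have heq : X t * uH = mprod (evars (lc + F.val)) := by
        rw [huH2, evars_add, hlc3, add_assoc]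
        simp only [Multiset.singleton_add, mprod_cons]
      have hmem := prod_mem_pow (K := K) (G := G) (lc + F.val) (by
        intro e he
        rcases Multiset.mem_add.mp he with he | he
        · exact hlc1 e he
        · exact hFG e he)
      have hexp : Multiset.card (lc + F.val) = dH := by
        rw [Multiset.card_add, hlc2]
        have : Multiset.card F.val = F.card := rfl
        omega
      rw [heq, hI, ← hexp]
      exact hmem
    · -- t is off the cycle (or the path is nontrivial)
      cases p with
      | nil => simp at hm1
      | @cons _ u _ h q =>
        have hq_es : ∀ e ∈ q.edges, e ∈ Estar := by
          have htl := tail_edges_mem c hc hlen hk (SimpleGraph.Walk.cons h q) hp hb hmin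
          intro e he
          have h2 := htl e (by rw [SimpleGraph.Walk.edges_cons, List.tail_cons]; exact he)
          rw [hEstar]
          exact h2
        obtain ⟨lp, w, hlp1, hlp2, hlp3, hlp4⟩ :=
          path1 hHG (q.length + 1) t b (SimpleGraph.Walk.cons h q) (by simp) (by omega)
        rw [SimpleGraph.Walk.edges_cons, List.tail_cons] at hlp4
        obtain ⟨lc, hlc1, hlc2, hlc3⟩ := cyc_pair hHG c hc hlen hb hlp3
        set P : Finset (Sym2 (Fin n)) := q.edges.toFinset with hPdef
        have hqnodup : q.edges.Nodup := by
          have hnd := hp.isTrail.edges_nodup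
          rw [SimpleGraph.Walk.edges_cons, List.nodup_cons] at hnd
          exact hnd.2
        have hPF : P ⊆ F := by
          intro e he
          rw [hPdef, List.mem_toFinset] at he
          rw [hFmem]
          exact hq_es e he
        have hPcard : P.card = q.length := by
          rw [hPdef, List.toFinset_card_of_nodup hqnodup, SimpleGraph.Walk.length_edges]
        have hsum : ∑ e ∈ F \ P, sym2vars e + ∑ e ∈ P, sym2vars e = ∑ e ∈ F, sym2vars e :=
          Finset.sum_sdiff hPF
        have hPsum : ∑ e ∈ P, sym2vars e = evars ↑q.edges := by
          rw [hPdef, List.sum_toFinset _ hqnodup, evars_coe]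
        have hFsum : evars F.val = ∑ e ∈ F, sym2vars e := rfl
        have hFPsum : evars ((F \ P).val) = ∑ e ∈ F \ P, sym2vars e := rfl
        have hkey : ({t} : Multiset (Fin n)) + ((↑c.support.tail : Multiset (Fin n))
              + evars F.val) = evars (lp + lc + (F \ P).val) := by
          rw [evars_add, evars_add, hFPsum, hFsum, ← hsum, hPsum]
          calc ({t} : Multiset (Fin n)) + (↑c.support.tail
                + (∑ e ∈ F \ P, sym2vars e + evars ↑q.edges))
              = ({t} + evars ↑q.edges) + ((↑c.support.tail : Multiset (Fin n))
                + ∑ e ∈ F \ P, sym2vars e) := by abel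
            _ = (evars lp + {w}) + ((↑c.support.tail : Multiset (Fin n))
                + ∑ e ∈ F \ P, sym2vars e) := by rw [hlp4]
            _ = evars lp + ({w} + ↑c.support.tail) + ∑ e ∈ F \ P, sym2vars e := by abel
            _ = evars lp + evars lc + ∑ e ∈ F \ P, sym2vars e := by rw [hlc3]
        have heq : X t * uH = mprod (evars (lp + lc + (F \ P).val)) := by
          rw [huH2, ← hkey]
          simp only [Multiset.singleton_add, mprod_cons]
        have hmem := prod_mem_pow (K := K) (G := G) (lp + lc + (F \ P).val) (by
          intro e he
          rcases Multiset.mem_add.mp he with he | he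
          · rcases Multiset.mem_add.mp he with he | he
            · exact hlp1 e he
            · exact hlc1 e he
          · exact hFG e (Finset.mem_sdiff.mp he).1)
        have hexp : Multiset.card (lp + lc + (F \ P).val) = dH := by
          rw [Multiset.card_add, Multiset.card_add, hlp2, hlc2]
          have h1 : Multiset.card ((F \ P).val) = (F \ P).card := rfl
          have h2 : (F \ P).card = F.card - P.card := Finset.card_sdiff_of_subset hPF
          have h3 : P.card ≤ F.card := Finset.card_le_card hPF
          omega
        rw [heq, hI, ← hexp]
        exact hmem
  -- colon membership
  have hcolon : uH ∈ (I ^ dH).colon mI := by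
    rw [Submodule.mem_colon]
    intro g hg
    rw [hmI] at hg
    induction hg using Submodule.span_induction with
    | mem x hx =>
        obtain ⟨t, rfl⟩ := hx
        rw [smul_eq_mul, mul_comm]
        exact claimX t
    | zero => simp
    | add x y _ _ hx hy => rw [smul_add]; exact Ideal.add_mem _ hx hy
    | smul a x _ hx =>
        rw [smul_comm]
        exact Submodule.smul_mem _ a hx
  -- non-membership
  have hnotmem : uH ∉ I ^ dH := by
    intro hmem
    have hle : I ≤ lowZero 2 := by
      rw [hI, Ideal.span_le]
      rintro f ⟨i, j, hij, rfl⟩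
      exact XX_mem_lowZero i j
    have h2 := pow_le_lowZero hle dH hmem
    have hcard : Multiset.card ((↑c.support.tail : Multiset (Fin n)) + evars F.val)
        = 2 * dH - 1 := by
      rw [Multiset.card_add, hcyccard, card_evars]
      have : Multiset.card F.val = F.card := rfl
      omega
    have hco : coeff ((↑c.support.tail : Multiset (Fin n)) + evars F.val).toFinsupp uH
        = 1 := by
      rw [huH2, mprod_eq_monomial, coeff_monomial]
      simp
    have hzero := h2 ((↑c.support.tail : Multiset (Fin n)) + evars F.val).toFinsupp (by
      rw [deg_toFinsupp, hcard]
      omega)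
    rw [hco] at hzero
    exact one_ne_zero hzero
  refine ⟨⟨hcolon, hnotmem⟩, dH, by omega, le_refl _, ?_⟩
  intro heq
  exact hnotmem (heq ▸ hcolon)
end

section
/- Let n ≥ 1 and let b₁,…,b_n, α₁,…,α_n, β₁,…,β_n be nonnegative integers with β₁ ≤ β₂ ≤ ⋯ ≤ β_n and β₁ = b₁. Then the system of inequalities 0 ≤ u_i ≤ b_i (i = 1,…,n) and α_i ≤ u₁ + ⋯ + u_i ≤ β_i (i = 1,…,n) has a solution u = (u₁,…,u_n) in nonnegative integers if and only if β_i + b_{i+1} + ⋯ + b_j ≥ α_j for every pair i, j with 1 ≤ i ≤ j ≤ n. (No monotonicity of the α_i is required.) -/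
/-!
Necessity: splitting `u₁ + ⋯ + u_j` at `i` bounds it by `β_i + b_{i+1} + ⋯ + b_j`.

Sufficiency: take the greedy partial sums `T₀ = 0`, `T_{k+1} = min (T_k + b_{k+1}) β_{k+1}`,
i.e. always add as much as the constraints `u_k ≤ b_k` and `u₁ + ⋯ + u_k ≤ β_k` allow.
Since `β` is monotone, `T` is nondecreasing, so its increments are admissible `u_k`. Unfolding the
recursion, `T_j` is the minimum of `β_i + b_{i+1} + ⋯ + b_j` over `i ≤ j` (the term `b₁ + ⋯ + b_j`
coming from `T₀` is dominated by the one for `i = 1` because `β₁ ≤ b₁`), hence `T_j ≥ α_j`.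
-/

open Finset

theorem sum_Iic_le_add_sum_Ioc {ι M : Type*} [LinearOrder ι] [LocallyFiniteOrder ι]
    [LocallyFiniteOrderBot ι] [AddCommMonoid M] [PartialOrder M] [IsOrderedAddMonoid M]
    {u b β : ι → M} (hub : ∀ l, u l ≤ b l) (huβ : ∀ i, ∑ l ∈ Iic i, u l ≤ β i)
    {i j : ι} (hij : i ≤ j) :
    ∑ l ∈ Iic j, u l ≤ β i + ∑ l ∈ Ioc i j, b l := by
  rw [← Iic_union_Ioc_eq_Iic hij, sum_union (Iic_disjoint_Ioc le_rfl)]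
  exact add_le_add (huβ i) (sum_le_sum fun l _ => hub l)

def greedyPartialSum (b β : ℕ → ℕ) : ℕ → ℕ
  | 0 => 0
  | k + 1 => min (greedyPartialSum b β k + b k) (β k)

section greedyPartialSum

variable (b β : ℕ → ℕ)

theorem greedyPartialSum_succ_le_add (k : ℕ) :
    greedyPartialSum b β (k + 1) ≤ greedyPartialSum b β k + b k :=
  min_le_left _ _

theorem greedyPartialSum_succ_le (k : ℕ) : greedyPartialSum b β (k + 1) ≤ β k :=
  min_le_right _ _

variable {b β}

theorem greedyPartialSum_monotone (hβ : Monotone β) : Monotone (greedyPartialSum b β) := by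
  refine monotone_nat_of_le_succ fun k => ?_
  cases k with
  | zero => exact Nat.zero_le _
  | succ k =>
    exact le_min (Nat.le_add_right _ _)
      ((greedyPartialSum_succ_le b β k).trans (hβ k.le_succ))

theorem sum_range_greedyPartialSum_sub (hβ : Monotone β) (k : ℕ) :
    ∑ i ∈ range k, (greedyPartialSum b β (i + 1) - greedyPartialSum b β i) =
      greedyPartialSum b β k := by
  rw [sum_range_tsub (greedyPartialSum_monotone hβ), greedyPartialSum, Nat.sub_zero]

theorem le_greedyPartialSum (hβb : β 0 ≤ b 0) {C j : ℕ}
    (hC : ∀ i ≤ j, C ≤ β i + ∑ l ∈ Ioc i j, b l) : C ≤ greedyPartialSum b β (j + 1) := by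
  induction j generalizing C with
  | zero =>
    have h0 : C ≤ β 0 := by simpa using hC 0 le_rfl
    exact le_min (by simp only [greedyPartialSum]; omega) h0
  | succ j ih =>
    have hlast : C ≤ β (j + 1) := by simpa using hC (j + 1) le_rfl
    have hprev : C - b (j + 1) ≤ greedyPartialSum b β (j + 1) := ih fun i hi => by
      have h := hC i (hi.trans j.le_succ)
      rw [sum_Ioc_succ_top hi] at h
      omega
    exact le_min (by omega) hlast

end greedyPartialSum

theorem exists_maximal_bounded_partialSums {b β : ℕ → ℕ} (hβ : Monotone β) (hβb : β 0 ≤ b 0) :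
    ∃ u : ℕ → ℕ, (∀ k, u k ≤ b k) ∧ ∀ j, ∑ l ∈ Iic j, u l ≤ β j ∧
      ∀ C, (∀ i ≤ j, C ≤ β i + ∑ l ∈ Ioc i j, b l) → C ≤ ∑ l ∈ Iic j, u l := by
  refine ⟨fun k => greedyPartialSum b β (k + 1) - greedyPartialSum b β k, fun k => ?_, fun j => ?_⟩
  · exact tsub_le_iff_left.mpr (greedyPartialSum_succ_le_add b β k)
  · rw [← Nat.range_succ_eq_Iic, sum_range_greedyPartialSum_sub hβ]
    exact ⟨greedyPartialSum_succ_le b β j, fun C hC => le_greedyPartialSum hβb hC⟩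

theorem Fin.clamp_val_self {m : ℕ} (i : Fin (m + 1)) : Fin.clamp i m = i :=
  Fin.ext (min_eq_left (Nat.le_of_lt_succ i.isLt))

theorem Fin.sum_Iic_val {M : Type*} [AddCommMonoid M] {n : ℕ} (g : ℕ → M) (i : Fin n) :
    ∑ l ∈ Iic i, g l = ∑ k ∈ Iic (i : ℕ), g k := by
  rw [← Fin.map_valEmbedding_Iic, sum_map, Fin.valEmbedding_apply]

theorem Fin.sum_Ioc_val {M : Type*} [AddCommMonoid M] {n : ℕ} (g : ℕ → M) (i j : Fin n) :
    ∑ l ∈ Ioc i j, g l = ∑ k ∈ Ioc (i : ℕ) j, g k := by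
  rw [← Fin.map_valEmbedding_Ioc, sum_map, Fin.valEmbedding_apply]

theorem exists_bounded_partialSums_of_le_add_sum_Ioc {m : ℕ} (b α β : Fin (m + 1) → ℕ)
    (hβ : Monotone β) (hβb : β 0 ≤ b 0)
    (H : ∀ i j, i ≤ j → α j ≤ β i + ∑ l ∈ Ioc i j, b l) :
    ∃ u : Fin (m + 1) → ℕ, (∀ i, u i ≤ b i) ∧
      ∀ i, α i ≤ ∑ l ∈ Iic i, u l ∧ ∑ l ∈ Iic i, u l ≤ β i := by
  obtain ⟨u, hub, hu⟩ := exists_maximal_bounded_partialSums (b := fun k => b (Fin.clamp k m))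
    (β := fun k => β (Fin.clamp k m)) (hβ.comp Fin.clamp_monotone) hβb
  have hsum (i j : Fin (m + 1)) :
      ∑ l ∈ Ioc i j, b l = ∑ k ∈ Ioc (i : ℕ) j, b (Fin.clamp k m) := by
    rw [← Fin.sum_Ioc_val (fun k => b (Fin.clamp k m))]
    simp only [Fin.clamp_val_self]
  refine ⟨fun i => u i, fun i => (hub i).trans_eq (congrArg b (Fin.clamp_val_self i)),
    fun i => ?_⟩
  rw [Fin.sum_Iic_val u]
  refine ⟨(hu i).2 _ fun k hk => ?_, (hu i).1.trans_eq (congrArg β (Fin.clamp_val_self i))⟩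
  have hk' : ((Fin.clamp k m : Fin (m + 1)) : ℕ) = k :=
    min_eq_left (hk.trans (Nat.le_of_lt_succ i.isLt))
  simpa only [hsum, hk'] using H (Fin.clamp k m) i (Fin.le_def.mpr (hk'.trans_le hk))

/-- The system `0 ≤ uᵢ ≤ bᵢ`, `αᵢ ≤ u₁ + ⋯ + uᵢ ≤ βᵢ` (for `i = 1,…,n`)
with `β₁ ≤ ⋯ ≤ βₙ` and `β₁ = b₁` has a solution in nonnegative integers if and only if
`βᵢ + b_{i+1} + ⋯ + b_j ≥ α_j` for all `1 ≤ i ≤ j ≤ n`. -/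
theorem plp_system_solvable_iff
    {n : ℕ} (hn : 0 < n) (b α β : Fin n → ℕ)
    (hβmono : Monotone β) (hβ1 : β ⟨0, hn⟩ = b ⟨0, hn⟩) :
    (∃ u : Fin n → ℕ, (∀ i, u i ≤ b i) ∧
      ∀ i, α i ≤ ∑ j ∈ Finset.Iic i, u j ∧ ∑ j ∈ Finset.Iic i, u j ≤ β i) ↔
    ∀ i j : Fin n, i ≤ j → α j ≤ β i + ∑ l ∈ Finset.Ioc i j, b l := by
  constructor
  · rintro ⟨u, hub, hu⟩ i j hij
    exact (hu j).1.trans (sum_Iic_le_add_sum_Ioc hub (fun i => (hu i).2) hij)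
  · obtain ⟨m, rfl⟩ := Nat.exists_eq_add_one_of_ne_zero hn.ne'
    exact exists_bounded_partialSums_of_le_add_sum_Ioc b α β hβmono hβ1.le
end

section
/- Let I be the basic PLP-polymatroidal ideal of type (0, b | α, β) in S = K[x₁,…,x_n], and let J ⊆ S be the ideal generated by all monomials x^v = x₁^{v₁}⋯x_n^{v_n} with 0 ≤ v_i ≤ b_i − 1 for all i, α_i ≤ v₁ + ⋯ + v_i ≤ β_i − 1 for i = 1,…,n−1, and v₁ + ⋯ + v_n = d − 1 (so J is the basic PLP-polymatroidal ideal of type (0, b−1 | (α₁,…,α_{n−1},α_n−1), β−1), possibly the zero ideal). Then (I : 𝔪) = I + J; that is, soc(I) = J. -/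
open MvPolynomial
namespace SocPLPAux

def pathFn (B C : ℕ → ℕ) : ℕ → ℕ
  | 0 => 0
  | i + 1 => min (B i) (pathFn B C i + C i)

lemma pathFn_step (B C : ℕ → ℕ) (i : ℕ) :
    pathFn B C (i + 1) = min (B i) (pathFn B C i + C i) := rfl

lemma pathFn_congr {B C C' : ℕ → ℕ} : ∀ {i : ℕ}, (∀ j < i, C j = C' j) →
    pathFn B C i = pathFn B C' i
  | 0, _ => rfl
  | (m+1), h => by
      rw [pathFn_step, pathFn_step, pathFn_congr (fun j hj => h j (by omega)),
        h m (by omega)]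

lemma pathFn_le_add_one {B C C' : ℕ → ℕ} {k : ℕ} (hne : ∀ j, j ≠ k → C' j = C j)
    (hk : C' k ≤ C k + 1) : ∀ i, pathFn B C' i ≤ pathFn B C i + 1
  | 0 => by simp [pathFn]
  | (i+1) => by
      have ih := pathFn_le_add_one (B:=B) hne hk i
      rw [pathFn_step, pathFn_step]
      by_cases hik : i = k
      · subst hik
        have he : pathFn B C' i = pathFn B C i :=
          pathFn_congr (fun j hj => hne j (by omega))
        omega
      · rw [hne i hik]; omega

lemma pathFn_drop {B C C' : ℕ → ℕ} {i0 : ℕ} (h : ∀ j, i0 ≤ j → C' j = C j)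
    (hle : pathFn B C' i0 ≤ pathFn B C i0) : ∀ i, i0 ≤ i → pathFn B C' i ≤ pathFn B C i := by
  intro i
  induction i with
  | zero => intro hi; have : i0 = 0 := by omega
            subst this; exact hle
  | succ m ih =>
      intro hi
      rcases Nat.lt_or_ge i0 (m+1) with h1 | h1
      · have hm : i0 ≤ m := by omega
        have := ih hm
        rw [pathFn_step, pathFn_step, h m hm]; omega
      · have : i0 = m + 1 := by omega
        subst this; exact hle

lemma pathFn_le_B {B C : ℕ → ℕ} (hB : ∀ i, B i ≤ B (i+1)) : ∀ i, pathFn B C i ≤ B i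
  | 0 => Nat.zero_le _
  | (i+1) => le_trans (by rw [pathFn_step]; exact min_le_left _ _) (hB i)

lemma pathFn_mono {B C : ℕ → ℕ} (hB : ∀ i, B i ≤ B (i+1)) (i : ℕ) :
    pathFn B C i ≤ pathFn B C (i+1) := by
  rw [pathFn_step]
  exact le_min (pathFn_le_B hB i) (Nat.le_add_right _ _)

lemma sum_Iic_eq_range {n : ℕ} (u : Fin n → ℕ) (i : Fin n) :
    ∑ j ∈ Finset.Iic i, u j
      = ∑ m ∈ Finset.range ((i : ℕ) + 1), (if h : m < n then u ⟨m, h⟩ else 0) := by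
  have h1 : Finset.range ((i : ℕ) + 1) = Finset.Iic (i : ℕ) := by
    ext m; simp only [Finset.mem_range, Finset.mem_Iic]; omega
  rw [h1, ← Fin.map_valEmbedding_Iic, Finset.sum_map]
  refine Finset.sum_congr rfl fun j _ => ?_
  simp [Fin.valEmbedding]

lemma sum_univ_eq_range {n : ℕ} (u : Fin n → ℕ) :
    ∑ j, u j = ∑ m ∈ Finset.range n, (if h : m < n then u ⟨m, h⟩ else 0) := by
  rw [← Fin.sum_univ_eq_sum_range (fun m => if h : m < n then u ⟨m, h⟩ else 0) n]
  refine Finset.sum_congr rfl fun j _ => ?_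
  simp

set_option maxHeartbeats 1000000 in
theorem main_comb {n : ℕ} (hn : 0 < n) (d : ℕ) (b α β : Fin n → ℕ)
    (hβmono : Monotone β) (hαlast : α ⟨n - 1, Nat.sub_lt hn Nat.one_pos⟩ = d)
    (hβlast : β ⟨n - 1, Nat.sub_lt hn Nat.one_pos⟩ = d)
    (w : Fin n → ℕ)
    (H : ∀ k : Fin n, ∃ u : Fin n → ℕ, (∀ i, u i ≤ b i) ∧
      (∀ i, α i ≤ ∑ j ∈ Finset.Iic i, u j ∧ ∑ j ∈ Finset.Iic i, u j ≤ β i) ∧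
      (∀ j, u j ≤ w j + if j = k then 1 else 0)) :
    (∃ u : Fin n → ℕ, (∀ i, u i ≤ b i) ∧
      (∀ i, α i ≤ ∑ j ∈ Finset.Iic i, u j ∧ ∑ j ∈ Finset.Iic i, u j ≤ β i) ∧
      (∀ j, u j ≤ w j)) ∨
    ((∀ i, w i + 1 ≤ b i) ∧
      (∀ i : Fin n, (i : ℕ) + 1 < n →
        α i ≤ ∑ j ∈ Finset.Iic i, w j ∧ (∑ j ∈ Finset.Iic i, w j) + 1 ≤ β i) ∧
      (∑ i, w i) + 1 = d) := by
  classical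
  obtain ⟨B, hBdef⟩ : ∃ B : ℕ → ℕ, B = fun i => if h : i < n then β ⟨i, h⟩ else d := ⟨_, rfl⟩
  obtain ⟨W, hWdef⟩ : ∃ W : ℕ → ℕ, W = fun i => if h : i < n then w ⟨i, h⟩ else 0 := ⟨_, rfl⟩
  obtain ⟨Bb, hBbdef⟩ : ∃ Bb : ℕ → ℕ, Bb = fun i => if h : i < n then b ⟨i, h⟩ else 0 := ⟨_, rfl⟩
  obtain ⟨C, hCdef⟩ : ∃ C : ℕ → ℕ, C = fun i => min (W i) (Bb i) := ⟨_, rfl⟩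
  have hBval : ∀ i : Fin n, B (i : ℕ) = β i := by
    intro i; simp [hBdef, i.isLt]
  have hWval : ∀ i : Fin n, W (i : ℕ) = w i := by
    intro i; simp [hWdef, i.isLt]
  have hBbval : ∀ i : Fin n, Bb (i : ℕ) = b i := by
    intro i; simp [hBbdef, i.isLt]
  have hβd : ∀ i : Fin n, β i ≤ d := by
    intro i
    have h1 : i ≤ ⟨n - 1, by omega⟩ := by
      rw [Fin.le_def]; simp only [Fin.val_mk]; have := i.isLt; omega
    exact le_trans (hβmono h1) (le_of_eq hβlast)
  have hBmono : ∀ i, B i ≤ B (i + 1) := by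
    intro i
    by_cases h1 : i + 1 < n
    · have h0 : i < n := by omega
      simp only [hBdef, dif_pos h1, dif_pos h0]
      exact hβmono (by rw [Fin.mk_le_mk]; omega)
    · by_cases h0 : i < n
      · simp only [hBdef, dif_pos h0, dif_neg h1]
        exact hβd _
      · simp only [hBdef, dif_neg h1, dif_neg h0]; exact le_rfl
  -- F1 : upper bound on partial sums by maximal path
  have F1 : ∀ (κ : ℕ → ℕ) (u : Fin n → ℕ), (∀ j : Fin n, u j ≤ κ (j : ℕ)) →
      (∀ i : Fin n, ∑ j ∈ Finset.Iic i, u j ≤ β i) →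
      ∀ m, m ≤ n →
        (∑ j ∈ Finset.range m, (if h : j < n then u ⟨j, h⟩ else 0)) ≤ pathFn B κ m := by
    intro κ u hu hs m
    induction m with
    | zero => intro _; simp [pathFn]
    | succ m ih =>
        intro hm1
        have hm : m < n := by omega
        rw [Finset.sum_range_succ, pathFn_step]
        have h1 := ih (by omega)
        have h3 : (∑ j ∈ Finset.range m, (if h : j < n then u ⟨j, h⟩ else 0))
            + (if h : m < n then u ⟨m, h⟩ else 0) ≤ β ⟨m, hm⟩ := by
          rw [← Finset.sum_range_succ]
          have h4 := sum_Iic_eq_range u ⟨m, hm⟩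
          simp only [Fin.val_mk] at h4
          rw [← h4]
          exact hs _
        have h4 : u ⟨m, hm⟩ ≤ κ m := hu ⟨m, hm⟩
        have h5 : B m = β ⟨m, hm⟩ := by simp [hBdef, hm]
        rw [dif_pos hm] at h3 ⊢
        omega
  -- the modified capacities
  obtain ⟨CkF, hCkFdef⟩ : ∃ CkF : Fin n → ℕ → ℕ,
      CkF = fun (k : Fin n) (m : ℕ) => min (W m + if m = (k : ℕ) then 1 else 0) (Bb m) := ⟨_, rfl⟩
  have hCkC : ∀ (k : Fin n) (j : ℕ), j ≠ (k : ℕ) → CkF k j = C j := by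
    intro k j hj; simp [hCkFdef, hCdef, if_neg hj]
  have hCk1 : ∀ k : Fin n, CkF k (k : ℕ) ≤ C (k : ℕ) + 1 := by
    intro k; simp only [hCkFdef, hCdef, if_pos]; omega
  -- every witness gives a lower bound for the modified path
  have hupGen : ∀ k i : Fin n, α i ≤ pathFn B (CkF k) ((i : ℕ) + 1) := by
    intro k i
    obtain ⟨u, hub, hsum, hwk⟩ := H k
    have hκ : ∀ j : Fin n, u j ≤ CkF k (j : ℕ) := by
      intro j
      simp only [hCkFdef]
      refine le_min ?_ ?_
      · have h1 := hwk j
        have h2 : ((j : ℕ) = (k : ℕ)) ↔ j = k := Fin.val_eq_val j k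
        rw [hWval]
        by_cases h3 : j = k
        · rw [if_pos (h2.mpr h3), if_pos h3] at *; omega
        · rw [if_neg (fun hc => h3 (h2.mp hc))]
          rw [if_neg h3] at h1; omega
      · rw [hBbval]; exact hub j
    have h6 := F1 (CkF k) u hκ (fun i => (hsum i).2) ((i : ℕ) + 1) (by have := i.isLt; omega)
    calc α i ≤ ∑ j ∈ Finset.Iic i, u j := (hsum i).1
      _ = _ := sum_Iic_eq_range u i
      _ ≤ _ := h6
  have key1 : ∀ i : Fin n, (i : ℕ) + 1 < n → α i ≤ pathFn B C ((i : ℕ) + 1) := by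
    intro i hi1
    have h1 := hupGen ⟨(i : ℕ) + 1, hi1⟩ i
    have h2 : pathFn B (CkF ⟨(i : ℕ) + 1, hi1⟩) ((i : ℕ) + 1) = pathFn B C ((i : ℕ) + 1) :=
      pathFn_congr (fun j hj => hCkC _ j (by simp only [Fin.val_mk]; omega))
    rw [h2] at h1; exact h1
  by_cases htop : α ⟨n - 1, by omega⟩ ≤ pathFn B C n
  · -- I-case : greedy construction
    left
    have hall : ∀ i : Fin n, α i ≤ pathFn B C ((i : ℕ) + 1) := by
      intro i
      by_cases hi : (i : ℕ) + 1 < n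
      · exact key1 i hi
      · have hival : (i : ℕ) = n - 1 := by have := i.isLt; omega
        have hieq : i = ⟨n - 1, by omega⟩ := Fin.ext hival
        rw [hieq]
        simp only [Fin.val_mk]
        rw [show n - 1 + 1 = n by omega]
        exact htop
    have hmono := pathFn_mono (B := B) (C := C) hBmono
    have hstep : ∀ j, pathFn B C (j + 1) ≤ pathFn B C j + C j := by
      intro j; rw [pathFn_step]; exact min_le_right _ _
    refine ⟨fun j => pathFn B C ((j : ℕ) + 1) - pathFn B C (j : ℕ), ?_, ?_, ?_⟩
    · intro i
      show pathFn B C ((i : ℕ) + 1) - pathFn B C (i : ℕ) ≤ b i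
      have h1 := hstep (i : ℕ)
      have h2 : C (i : ℕ) ≤ b i := by
        simp only [hCdef]; rw [hBbval]; exact min_le_right _ _
      have := hmono (i : ℕ); omega
    · have tel : ∀ m, m ≤ n → (∑ j ∈ Finset.range m,
          (if h : j < n then pathFn B C ((j : ℕ) + 1) - pathFn B C j else 0)) = pathFn B C m := by
        intro m
        induction m with
        | zero => intro _; simp [pathFn]
        | succ m ih =>
            intro h
            rw [Finset.sum_range_succ, ih (by omega), dif_pos (by omega : m < n)]
            have := hmono m; omega
      intro i
      have h0 := sum_Iic_eq_range (fun j => pathFn B C ((j : ℕ) + 1) - pathFn B C (j : ℕ)) i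
      simp only [Fin.val_mk] at h0
      rw [h0, tel ((i : ℕ) + 1) (by have := i.isLt; omega)]
      constructor
      · exact hall i
      · rw [pathFn_step]
        rw [← hBval i]
        exact min_le_left _ _
    · intro j
      show pathFn B C ((j : ℕ) + 1) - pathFn B C (j : ℕ) ≤ w j
      have h1 := hstep (j : ℕ)
      have h2 : C (j : ℕ) ≤ w j := by
        simp only [hCdef]; rw [hWval]; exact min_le_left _ _
      have := hmono (j : ℕ); omega
  · -- J-case
    right
    have hd' : pathFn B C n + 1 ≤ d := by
      rw [hαlast] at htop; omega
    have hup : ∀ k : Fin n, d ≤ pathFn B (CkF k) n := by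
      intro k
      have h1 := hupGen k ⟨n - 1, by omega⟩
      rw [hαlast] at h1
      simp only [Fin.val_mk] at h1
      rw [show n - 1 + 1 = n by omega] at h1
      exact h1
    have hle1 : ∀ k : Fin n, pathFn B (CkF k) n ≤ pathFn B C n + 1 :=
      fun k => pathFn_le_add_one (hCkC k) (hCk1 k) n
    have hCn : pathFn B C n + 1 = d := by
      have h1 := hup ⟨0, hn⟩
      have h2 := hle1 ⟨0, hn⟩
      omega
    -- per-coordinate analysis
    have keyk : ∀ k : Fin n, w k + 1 ≤ b k ∧
        pathFn B C ((k : ℕ) + 1) = pathFn B C (k : ℕ) + w k ∧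
        pathFn B C ((k : ℕ) + 1) + 1 ≤ β k := by
      intro k
      have key2 : pathFn B C ((k : ℕ) + 1) + 1 ≤ pathFn B (CkF k) ((k : ℕ) + 1) := by
        by_contra hcon
        have h1 : pathFn B (CkF k) ((k : ℕ) + 1) ≤ pathFn B C ((k : ℕ) + 1) := by omega
        have h2 := pathFn_drop (fun j hj => hCkC k j (by omega)) h1 n (by have := k.isLt; omega)
        have h3 := hup k
        omega
      have e1 : pathFn B (CkF k) ((k : ℕ) + 1) ≤ pathFn B C ((k : ℕ) + 1) + 1 :=
        pathFn_le_add_one (hCkC k) (hCk1 k) _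
      have e0 : pathFn B (CkF k) (k : ℕ) = pathFn B C (k : ℕ) :=
        (pathFn_congr (fun j hj => (hCkC k j (by omega)).symm)).symm
      have e2 : pathFn B (CkF k) ((k : ℕ) + 1)
          = min (B (k : ℕ)) (pathFn B C (k : ℕ) + CkF k (k : ℕ)) := by
        rw [pathFn_step, e0]
      have e3 : pathFn B C ((k : ℕ) + 1)
          = min (B (k : ℕ)) (pathFn B C (k : ℕ) + C (k : ℕ)) := pathFn_step _ _ _
      have e4 : CkF k (k : ℕ) = min (W (k : ℕ) + 1) (Bb (k : ℕ)) := by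
        simp [hCkFdef]
      have e5 : C (k : ℕ) = min (W (k : ℕ)) (Bb (k : ℕ)) := by rw [hCdef]
      rw [hWval] at e4 e5
      rw [hBbval] at e4 e5
      rw [hBval] at e2 e3
      rw [e4] at e2
      rw [e5] at e3
      omega
    have tel2 : ∀ m, m ≤ n → pathFn B C m
        = ∑ j ∈ Finset.range m, (if h : j < n then w ⟨j, h⟩ else 0) := by
      intro m
      induction m with
      | zero => intro _; simp [pathFn]
      | succ m ih =>
          intro h
          have hm : m < n := by omega
          have h1 := (keyk ⟨m, hm⟩).2.1
          simp only [Fin.val_mk] at h1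
          rw [Finset.sum_range_succ, ← ih (by omega), dif_pos hm, h1]
    refine ⟨fun i => (keyk i).1, ?_, ?_⟩
    · intro i hi
      have h0 := sum_Iic_eq_range w i
      have h1 := tel2 ((i : ℕ) + 1) (by have := i.isLt; omega)
      rw [h0, ← h1]
      exact ⟨key1 i hi, (keyk i).2.2⟩
    · rw [sum_univ_eq_range w, ← tel2 n le_rfl]
      exact hCn

end SocPLPAux

open MvPolynomial

namespace SocPLPAux

lemma monomial_eq_prod {K : Type*} [CommSemiring K] {n : ℕ} (s : Fin n →₀ ℕ) :
    (monomial s (1 : K)) = ∏ i, X i ^ s i := by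
  have h : ∏ x ∈ s.support, (X x ^ s x : MvPolynomial (Fin n) K)
      = ∏ x ∈ Finset.univ, X x ^ s x :=
    Finset.prod_subset (Finset.subset_univ _)
      (fun x _ hx => by rw [Finsupp.notMem_support_iff.mp hx, pow_zero])
  rw [← prod_X_pow_eq_monomial, h]

end SocPLPAux

open SocPLPAux

/-- For a basic PLP-polymatroidal ideal `I` of type `(0, b | α, β)`,
`soc(I)` is the basic PLP-polymatroidal ideal `J` of type
`(0, b-1 | (α₁,…,α_{n-1},α_n - 1), β-1)`; that is, `(I : 𝔪) = I + J`. -/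
theorem soc_of_PLP
    {K : Type*} [Field K] {n : ℕ} (hn : 0 < n) (d : ℕ) (hd : 1 ≤ d)
    (b α β : Fin n → ℕ)
    (hαmono : Monotone α) (hβmono : Monotone β)
    (hαlast : α ⟨n - 1, by omega⟩ = d) (hβlast : β ⟨n - 1, by omega⟩ = d)
    (hαβ : ∀ i, α i ≤ β i)
    (hα1 : α ⟨0, hn⟩ = 0) (hβ1 : β ⟨0, hn⟩ = b ⟨0, hn⟩)
    (I : Ideal (MvPolynomial (Fin n) K))
    (hI : I = Ideal.span {f | ∃ u : Fin n → ℕ, (∀ i, u i ≤ b i) ∧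
        (∀ i, α i ≤ ∑ j ∈ Finset.Iic i, u j ∧ ∑ j ∈ Finset.Iic i, u j ≤ β i) ∧
        f = ∏ i, X i ^ u i})
    (J : Ideal (MvPolynomial (Fin n) K))
    (hJ : J = Ideal.span {f | ∃ v : Fin n → ℕ, (∀ i, v i + 1 ≤ b i) ∧
        (∀ i : Fin n, (i : ℕ) + 1 < n →
          α i ≤ ∑ j ∈ Finset.Iic i, v j ∧ (∑ j ∈ Finset.Iic i, v j) + 1 ≤ β i) ∧
        (∑ i, v i) + 1 = d ∧
        f = ∏ i, X i ^ v i})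
    (mI : Ideal (MvPolynomial (Fin n) K)) (hmI : mI = Ideal.span (Set.range X)) :
    I.colon mI = I ⊔ J := by
  classical
  -- the generating sets, as sets of exponent vectors
  set SI : Set (Fin n →₀ ℕ) := {s | (∀ i, s i ≤ b i) ∧
      (∀ i, α i ≤ ∑ j ∈ Finset.Iic i, s j ∧ ∑ j ∈ Finset.Iic i, s j ≤ β i)} with hSI
  set SJ : Set (Fin n →₀ ℕ) := {s | (∀ i, s i + 1 ≤ b i) ∧
      (∀ i : Fin n, (i : ℕ) + 1 < n →
        α i ≤ ∑ j ∈ Finset.Iic i, s j ∧ (∑ j ∈ Finset.Iic i, s j) + 1 ≤ β i) ∧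
      (∑ i, s i) + 1 = d} with hSJ
  have hIs : I = Ideal.span ((fun s => monomial s (1 : K)) '' SI) := by
    rw [hI]; congr 1; ext f
    constructor
    · rintro ⟨u, h1, h2, rfl⟩
      refine ⟨Finsupp.equivFunOnFinite.symm u, ⟨?_, ?_⟩, ?_⟩
      · intro i; simpa using h1 i
      · intro i; simpa using h2 i
      · show monomial (Finsupp.equivFunOnFinite.symm u) (1 : K) = ∏ i, X i ^ u i
        rw [monomial_eq_prod]
        exact Finset.prod_congr rfl fun i _ => by simp
    · rintro ⟨s, ⟨h1, h2⟩, rfl⟩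
      exact ⟨⇑s, h1, h2, (monomial_eq_prod s)⟩
  have hJs : J = Ideal.span ((fun s => monomial s (1 : K)) '' SJ) := by
    rw [hJ]; congr 1; ext f
    constructor
    · rintro ⟨v, h1, h2, h3, rfl⟩
      refine ⟨Finsupp.equivFunOnFinite.symm v, ⟨?_, ?_, ?_⟩, ?_⟩
      · intro i; simpa using h1 i
      · intro i hi; simpa using h2 i hi
      · simpa using h3
      · show monomial (Finsupp.equivFunOnFinite.symm v) (1 : K) = ∏ i, X i ^ v i
        rw [monomial_eq_prod]
        exact Finset.prod_congr rfl fun i _ => by simp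
    · rintro ⟨s, ⟨h1, h2, h3⟩, rfl⟩
      exact ⟨⇑s, h1, h2, h3, (monomial_eq_prod s)⟩
  -- the key product identity for multiplying a generator by a variable
  have hprodmul : ∀ (v : Fin n → ℕ) (k : Fin n),
      (∏ i, X i ^ v i : MvPolynomial (Fin n) K) * X k
        = ∏ i, X i ^ (v i + if i = k then 1 else 0) := by
    intro v k
    simp only [pow_add]
    rw [Finset.prod_mul_distrib]
    congr 1
    rw [Finset.prod_eq_single k (fun i _ hne => by rw [if_neg hne, pow_zero])
      (fun h => absurd (Finset.mem_univ k) h), if_pos rfl, pow_one]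
  have hsumsplit : ∀ (v : Fin n → ℕ) (k i : Fin n),
      ∑ j ∈ Finset.Iic i, (v j + if j = k then 1 else 0)
        = (∑ j ∈ Finset.Iic i, v j) + if k ≤ i then 1 else 0 := by
    intro v k i
    rw [Finset.sum_add_distrib]
    congr 1
    rw [Finset.sum_ite_eq' (Finset.Iic i) k (fun _ => 1)]
    simp [Finset.mem_Iic]
  -- top index facts
  have htopIic : ∀ i : Fin n, (i : ℕ) = n - 1 → Finset.Iic i = Finset.univ := by
    intro i hi
    refine Finset.eq_univ_of_forall fun j => Finset.mem_Iic.mpr ?_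
    rw [Fin.le_def, hi]
    have := j.isLt; omega
  refine le_antisymm ?_ ?_
  · -- colon ⊆ I ⊔ J
    intro f hf
    rw [hIs, hJs, ← Ideal.span_union, ← Set.image_union]
    rw [mem_ideal_span_monomial_image]
    intro m hm
    have H : ∀ k : Fin n, ∃ u : Fin n → ℕ, (∀ i, u i ≤ b i) ∧
        (∀ i, α i ≤ ∑ j ∈ Finset.Iic i, u j ∧ ∑ j ∈ Finset.Iic i, u j ≤ β i) ∧
        (∀ j, u j ≤ m j + if j = k then 1 else 0) := by
      intro k
      have hX : X k ∈ mI := by rw [hmI]; exact Ideal.subset_span ⟨k, rfl⟩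
      have h1 : f * X k ∈ I := by
        have := Submodule.mem_colon.mp hf (X k) hX
        rwa [smul_eq_mul] at this
      rw [hIs, mem_ideal_span_monomial_image] at h1
      obtain ⟨s, hsI, hsle⟩ := h1 (m + Finsupp.single k 1) (by
        rw [support_mul_X, Finset.mem_map]
        exact ⟨m, hm, by simp [addRightEmbedding_apply]⟩)
      refine ⟨⇑s, hsI.1, hsI.2, fun j => ?_⟩
      have h2 := Finsupp.le_def.mp hsle j
      rw [Finsupp.add_apply, Finsupp.single_apply] at h2
      by_cases h3 : j = k
      · rw [if_pos h3]; rw [if_pos h3.symm] at h2; exact h2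
      · rw [if_neg h3]; rw [if_neg (fun hc => h3 hc.symm)] at h2; omega
    rcases SocPLPAux.main_comb hn d b α β hβmono hαlast hβlast (⇑m) H with
      ⟨u, h1, h2, h3⟩ | ⟨h1, h2, h3⟩
    · refine ⟨Finsupp.equivFunOnFinite.symm u, Or.inl ⟨?_, ?_⟩, ?_⟩
      · intro i; simpa using h1 i
      · intro i; simpa using h2 i
      · rw [Finsupp.le_def]; intro j; simpa using h3 j
    · exact ⟨m, Or.inr ⟨h1, h2, h3⟩, le_rfl⟩
  · -- I ⊔ J ⊆ colon
    refine sup_le ?_ ?_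
    · intro x hx
      refine Submodule.mem_colon.mpr fun p hp => ?_
      rw [smul_eq_mul]
      exact Ideal.mul_mem_right p I hx
    · rw [hJ, Ideal.span_le]
      rintro g ⟨v, hv1, hv2, hv3, rfl⟩
      rw [SetLike.mem_coe]
      refine Submodule.mem_colon.mpr fun p hp => ?_
      rw [smul_eq_mul, mul_comm]
      -- show p * (prod) ∈ I for all p ∈ mI
      have hgen : ∀ k : Fin n, (∏ i, X i ^ v i : MvPolynomial (Fin n) K) * X k ∈ I := by
        intro k
        rw [hI, hprodmul]
        refine Ideal.subset_span ⟨fun i => v i + if i = k then 1 else 0, ?_, ?_, rfl⟩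
        · intro i
          show v i + (if i = k then 1 else 0) ≤ b i
          by_cases h3 : i = k
          · rw [if_pos h3]; exact hv1 i
          · rw [if_neg h3]; have := hv1 i; omega
        · intro i
          show α i ≤ ∑ j ∈ Finset.Iic i, (v j + if j = k then 1 else 0) ∧
            ∑ j ∈ Finset.Iic i, (v j + if j = k then 1 else 0) ≤ β i
          rw [hsumsplit]
          by_cases hi : (i : ℕ) + 1 < n
          · have h4 := hv2 i hi
            by_cases h5 : k ≤ i
            · rw [if_pos h5]; omega
            · rw [if_neg h5]; omega
          · have hival : (i : ℕ) = n - 1 := by have := i.isLt; omega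
            have hieq : i = ⟨n - 1, by omega⟩ := Fin.ext hival
            have h6 : k ≤ i := by rw [Fin.le_def, hival]; have := k.isLt; omega
            rw [if_pos h6, htopIic i hival]
            rw [hieq, hαlast, hβlast]
            omega
      have hcol : mI ≤ I.colon (Ideal.span {∏ i, X i ^ v i} : Ideal (MvPolynomial (Fin n) K)) := by
        rw [hmI, Ideal.span_le]
        rintro _ ⟨k, rfl⟩
        rw [SetLike.mem_coe, Ideal.mem_colon_span_singleton, mul_comm]
        exact hgen k
      exact Ideal.mem_colon_span_singleton.mp (hcol hp)
end

section
/- Let n ≥ 1 and k ≥ n − 1 be integers and let t₁,…,t_n be integers with 0 ≤ t_i ≤ k for all i. Assume k + 1 divides t₁ + ⋯ + t_n + 1. For each i set T_i = t₁ + ⋯ + t_i. Then there exist integers λ₁,…,λ_n with: λ_i ∈ {0,1} for all i and λ_i = 1 whenever t_i = k; ⌊(T_i − k)/(k+1)⌋ ≤ λ₁ + ⋯ + λ_i ≤ ⌈T_i/(k+1)⌉ for i = 1,…,n−1; and λ₁ + ⋯ + λ_n = (T_n + 1)/(k+1). (This is the solvability of the auxiliary system of inequalities arising in the proof that Soc*(I)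 is generated in degrees < n for a PLP-polymatroidal ideal I.) -/
/-!
Put `aᵢ = tᵢ + 1 ∈ [1, k + 1]` and `λᵢ = ⌊(a₁ + ⋯ + aᵢ)/(k+1)⌋ - ⌊(a₁ + ⋯ + aᵢ₋₁)/(k+1)⌋`.
Since each `aᵢ ≤ k + 1`, the rounded prefix sums grow by at most one per step, and by exactly
one when `aᵢ = k + 1`, i.e. `tᵢ = k`. The partial sums of `λ` telescope to
`⌊(Tᵢ + i)/(k+1)⌋`, which lies between `⌊(Tᵢ - k)/(k+1)⌋` and `⌊(Tᵢ + k)/(k+1)⌋ = ⌈Tᵢ/(k+1)⌉`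
because `0 ≤ i ≤ k`; for `i = n` it equals `(Tₙ + 1)/(k+1)` because `n - 1 < k + 1`.
-/

open Finset

theorem Fin.sum_Iic_eq_sum_range {M : Type*} [AddCommMonoid M] {n : ℕ} (f : ℕ → M)
    (i : Fin n) : ∑ j ∈ Iic i, f j = ∑ j ∈ range (i + 1), f j := by
  rw [Nat.range_succ_eq_Iic, ← Fin.map_valEmbedding_Iic, sum_map]
  rfl

def prefixQuot (a : ℕ → ℕ) (d m : ℕ) : ℕ := (∑ j ∈ range m, a j) / d

namespace prefixQuot

variable {a : ℕ → ℕ} {d : ℕ}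

theorem monotone : Monotone (prefixQuot a d) := fun _ _ h =>
  Nat.div_le_div_right (sum_le_sum_of_subset (range_subset_range.mpr h))

theorem succ_le {m : ℕ} (h : a m ≤ d) : prefixQuot a d (m + 1) ≤ prefixQuot a d m + 1 := by
  unfold prefixQuot
  calc (∑ j ∈ range (m + 1), a j) / d ≤ (∑ j ∈ range m, a j + d) / d :=
        Nat.div_le_div_right (by rw [sum_range_succ]; omega)
    _ ≤ (∑ j ∈ range m, a j) / d + 1 := by
        rcases d.eq_zero_or_pos with rfl | hd
        · simp
        · rw [Nat.add_div_right _ hd]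

theorem succ_of_eq {m : ℕ} (hd : 0 < d) (h : a m = d) :
    prefixQuot a d (m + 1) = prefixQuot a d m + 1 := by
  rw [prefixQuot, sum_range_succ, h, Nat.add_div_right _ hd, prefixQuot]

theorem sum_range_sub (m : ℕ) :
    ∑ j ∈ range m, (prefixQuot a d (j + 1) - prefixQuot a d j) = prefixQuot a d m := by
  rw [sum_range_tsub monotone]
  simp [prefixQuot]

end prefixQuot

theorem Int.floor_natCast_sub_div_le (T c k : ℕ) :
    ⌊((T : ℚ) - k) / (k + 1)⌋ ≤ (((T + c) / (k + 1) : ℕ) : ℤ) := by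
  have hlt : T + c < ((T + c) / (k + 1) + 1) * (k + 1) := by
    rw [add_one_mul]; exact Nat.lt_div_mul_add k.succ_pos
  generalize (T + c) / (k + 1) = q at hlt ⊢
  rw [Int.floor_le_iff, div_lt_iff₀ (by positivity)]
  have hlt' : (T : ℚ) + c < (q + 1) * (k + 1) := by exact_mod_cast hlt
  push_cast
  linarith [(c.cast_nonneg : (0 : ℚ) ≤ c), (k.cast_nonneg : (0 : ℚ) ≤ k)]

theorem Int.natCast_add_div_le_ceil {T c k : ℕ} (hc : c ≤ k) :
    (((T + c) / (k + 1) : ℕ) : ℤ) ≤ ⌈(T : ℚ) / (k + 1)⌉ := by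
  have hle : (T + c) / (k + 1) * (k + 1) ≤ T + c := Nat.div_mul_le_self ..
  generalize (T + c) / (k + 1) = q at hle ⊢
  rw [Int.le_ceil_iff, lt_div_iff₀ (by positivity)]
  have hle' : (q : ℚ) * (k + 1) ≤ T + c := by exact_mod_cast hle
  have hc' : (c : ℚ) ≤ k := by exact_mod_cast hc
  push_cast
  linarith

/-- The auxiliary combinatorial system arising in the proof that `Soc*(I)`
is generated in degrees `< n` for a PLP-polymatroidal ideal is solvable: given
`n ≥ 1`, `k ≥ n - 1`, `0 ≤ tᵢ ≤ k` with `(k+1) ∣ t₁ + ⋯ + tₙ + 1`, there are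
`λᵢ ∈ {0,1}` with `λᵢ = 1` whenever `tᵢ = k`,
`⌊(Tᵢ - k)/(k+1)⌋ ≤ λ₁ + ⋯ + λᵢ ≤ ⌈Tᵢ/(k+1)⌉` for `i = 1,…,n-1`, and
`λ₁ + ⋯ + λₙ = (Tₙ + 1)/(k+1)`, where `Tᵢ = t₁ + ⋯ + tᵢ`. -/
theorem plp_auxiliary_system_solvable
    (n k : ℕ) (hn : 1 ≤ n) (hk : n - 1 ≤ k)
    (t : Fin n → ℕ) (ht : ∀ i, t i ≤ k)
    (hdvd : (k + 1) ∣ (∑ i, t i) + 1) :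
    ∃ lam : Fin n → ℕ,
      (∀ i, lam i ≤ 1) ∧
      (∀ i, t i = k → lam i = 1) ∧
      (∀ i : Fin n, (i : ℕ) + 1 < n →
        ⌊(((∑ j ∈ Finset.Iic i, t j : ℕ) : ℚ) - (k : ℚ)) / ((k : ℚ) + 1)⌋ ≤
            ((∑ j ∈ Finset.Iic i, lam j : ℕ) : ℤ) ∧
        ((∑ j ∈ Finset.Iic i, lam j : ℕ) : ℤ) ≤
            ⌈((∑ j ∈ Finset.Iic i, t j : ℕ) : ℚ) / ((k : ℚ) + 1)⌉) ∧
      (k + 1) * (∑ i, lam i) = (∑ i, t i) + 1 := by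
  set a : ℕ → ℕ := fun j => Function.extend Fin.val t 0 j + 1
  have ha (i : Fin n) : a i = t i + 1 := by simp [a, Fin.val_injective.extend_apply]
  have hsum (s : Finset (Fin n)) : ∑ j ∈ s, a j = ∑ j ∈ s, t j + #s := by
    simp [ha, sum_add_distrib]
  set F := prefixQuot a (k + 1)
  have hF_Iic (i : Fin n) : F (i + 1) = (∑ j ∈ Iic i, t j + (i + 1)) / (k + 1) := by
    change (∑ j ∈ range (i + 1), a j) / (k + 1) = _
    rw [← Fin.sum_Iic_eq_sum_range, hsum, Fin.card_Iic]
  have hF_lam (i : Fin n) : ∑ j ∈ Iic i, (F (j + 1) - F j) = F (i + 1) := by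
    rw [Fin.sum_Iic_eq_sum_range (fun m => F (m + 1) - F m), prefixQuot.sum_range_sub]
  refine ⟨fun i => F (i + 1) - F i, fun i => ?_, fun i hi => ?_, fun i hi => ?_, ?_⟩
  · have : F (i + 1) ≤ F i + 1 := prefixQuot.succ_le (by rw [ha]; exact Nat.succ_le_succ (ht i))
    change F (i + 1) - F i ≤ 1
    omega
  · have : F (i + 1) = F i + 1 := prefixQuot.succ_of_eq k.succ_pos (by rw [ha, hi])
    change F (i + 1) - F i = 1
    omega
  · rw [hF_lam, hF_Iic]
    exact ⟨Int.floor_natCast_sub_div_le _ _ _, Int.natCast_add_div_le_ceil (by omega)⟩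
  · obtain ⟨m, hm⟩ := hdvd
    have hF_n : F n = m := by
      change (∑ j ∈ range n, a j) / (k + 1) = m
      rw [← Fin.sum_univ_eq_sum_range, hsum, card_univ, Fintype.card_fin,
        show ∑ i, t i + n = (k + 1) * m + (n - 1) by omega,
        Nat.mul_add_div k.succ_pos, Nat.div_eq_of_lt (by omega), add_zero]
    change (k + 1) * ∑ i : Fin n, (F (i + 1) - F i) = _
    rw [Fin.sum_univ_eq_sum_range (fun j => F (j + 1) - F j), prefixQuot.sum_range_sub]
    change (k + 1) * F n = _
    rw [hF_n, hm]
end
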